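/- arXiv:2207.06290 — 4 statements merged into one kernel-verified Lean document; each statement's English description precedes it below -/
import Mathlib

section
/- Let X = (X_1, …, X_n) be a tuple of compact convex sets in ℝ^d and let P be a set of representatives for X. Then there exists a tuple Y = (Y_1, …, Y_n) of compact convex sets in ℝ^d such that: (i) Y_i ⊆ X_i for all i ∈ [n]; (ii) Y_i ∩ P = X_i ∩ P for all i ∈ [n]; (iii) code(Y) = code(X); and (iv) Y is inclusion-minimal among all tuples satisfying (i), (ii) and (iii), i.e., no tuple Z of compact convex sets satisfying (i), (ii), (iii) (with Z in place of Y) has Z_i ⊆ Y_i for all i with Z_j ⊊ Y_j for some j. -/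
open Set

noncomputable section

/-- The intersection pattern of a tuple of sets at a point. -/
def pattern {n : ℕ} {E : Type*} (X : Fin n → Set E) (p : E) : Set (Fin n) :=
  {i | p ∈ X i}

/-- The convex code of a tuple of sets. -/
def code {n : ℕ} {E : Type*} (X : Fin n → Set E) : Set (Set (Fin n)) :=
  Set.range (pattern X)

/-- At a point of `P`, a tuple `Z` squeezed between `X ∩ P` and `X` has the same pattern as `X`. -/
lemma pattern_eq_of_sub {n : ℕ} {E : Type*} {X Z : Fin n → Set E} {P : Set E}
    (hsub : ∀ i, Z i ⊆ X i) (hint : ∀ i, Z i ∩ P = X i ∩ P) {p : E} (hp : p ∈ P) :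
    pattern Z p = pattern X p := by
  ext i
  simp only [pattern, mem_setOf_eq]
  constructor
  · exact fun h => hsub i h
  · intro h
    have : p ∈ X i ∩ P := ⟨h, hp⟩
    rw [← hint i] at this
    exact this.1

/-- Zorn's lemma for minimal elements in a subset. -/
lemma zorn_min {α : Type*} [Preorder α] (s : Set α)
    (ih : ∀ c ⊆ s, IsChain (· ≤ ·) c → ∀ y ∈ c, ∃ lb ∈ s, ∀ z ∈ c, lb ≤ z)
    (x : α) (hxs : x ∈ s) :
    ∃ m ∈ s, m ≤ x ∧ ∀ z ∈ s, z ≤ m → m ≤ z := by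
  obtain ⟨m, hxm, hm⟩ := zorn_le_nonempty₀ (α := αᵒᵈ) s
    (fun c hcs hc y hy => by
      obtain ⟨lb, hlbs, hlb⟩ := ih c hcs hc.symm y hy
      exact ⟨lb, hlbs, fun z hz => hlb z hz⟩) x hxs
  exact ⟨m, hm.1, hxm, fun z hzs hzm => hm.2 (y := z) hzs hzm⟩

/-- Existence of inclusion-minimal realizations: given a tuple `X` of compact convex sets
in `ℝ^d` and a set of representatives `P` for `X`, there is a tuple `Y` of compact convex
sets with `Y i ⊆ X i`, `Y i ∩ P = X i ∩ P`, `code Y = code X`, which is inclusion-minimal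
among all tuples with these properties. -/
theorem exists_inclusion_minimal_realization {d n : ℕ}
    (X : Fin n → Set (EuclideanSpace ℝ (Fin d)))
    (hXcpt : ∀ i, IsCompact (X i)) (hXcvx : ∀ i, Convex ℝ (X i))
    (P : Set (EuclideanSpace ℝ (Fin d)))
    (hP : code X = pattern X '' P) :
    ∃ Y : Fin n → Set (EuclideanSpace ℝ (Fin d)),
      (∀ i, IsCompact (Y i)) ∧ (∀ i, Convex ℝ (Y i)) ∧
      (∀ i, Y i ⊆ X i) ∧
      (∀ i, Y i ∩ P = X i ∩ P) ∧
      code Y = code X ∧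
      (∀ Z : Fin n → Set (EuclideanSpace ℝ (Fin d)),
        (∀ i, IsCompact (Z i)) → (∀ i, Convex ℝ (Z i)) →
        (∀ i, Z i ⊆ X i) → (∀ i, Z i ∩ P = X i ∩ P) → code Z = code X →
        (∀ i, Z i ⊆ Y i) → ∀ j, ¬ Z j ⊂ Y j) := by
  let E := EuclideanSpace ℝ (Fin d)
  set S : Set (Fin n → Set E) :=
    {Z | (∀ i, IsCompact (Z i)) ∧ (∀ i, Convex ℝ (Z i)) ∧ (∀ i, Z i ⊆ X i) ∧
      (∀ i, Z i ∩ P = X i ∩ P) ∧ code Z = code X} with hS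
  have hXS : X ∈ S := ⟨hXcpt, hXcvx, fun _ => subset_rfl, fun _ => rfl, rfl⟩
  -- code X ⊆ code Z for any Z ∈ S-like tuple (uses representatives)
  have codeX_sub : ∀ Z : Fin n → Set E, (∀ i, Z i ⊆ X i) → (∀ i, Z i ∩ P = X i ∩ P) →
      code X ⊆ code Z := by
    intro Z hsub hint σ hσ
    rw [hP] at hσ
    obtain ⟨p, hpP, rfl⟩ := hσ
    exact ⟨p, pattern_eq_of_sub hsub hint hpP⟩
  -- Zorn: chains have lower bounds
  have key : ∀ c ⊆ S, IsChain (· ≤ ·) c → ∀ y ∈ c, ∃ lb ∈ S, ∀ z ∈ c, lb ≤ z := by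
    intro c hcS hc Z₀ hZ₀c
    set W : Fin n → Set E := fun i => ⋂ Z ∈ c, Z i with hW
    have hWsub : ∀ Z ∈ c, ∀ i, W i ⊆ Z i := fun Z hZ i =>
      biInter_subset_of_mem (x := Z) hZ
    have hWX : ∀ i, W i ⊆ X i := fun i =>
      (hWsub Z₀ hZ₀c i).trans ((hcS hZ₀c).2.2.1 i)
    have hWclosed : ∀ i, IsClosed (W i) := by
      intro i
      exact isClosed_biInter fun Z hZ => ((hcS hZ).1 i).isClosed
    have hWcpt : ∀ i, IsCompact (W i) :=
      fun i => ((hcS hZ₀c).1 i).of_isClosed_subset (hWclosed i) (hWsub Z₀ hZ₀c i)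
    have hWcvx : ∀ i, Convex ℝ (W i) :=
      fun i => convex_iInter fun Z => convex_iInter fun hZ => (hcS hZ).2.1 i
    have hXPsub : ∀ Z ∈ c, ∀ i, X i ∩ P ⊆ Z i := by
      intro Z hZ i
      rw [← (hcS hZ).2.2.2.1 i]
      exact inter_subset_left
    have hWint : ∀ i, W i ∩ P = X i ∩ P := by
      intro i
      apply Subset.antisymm
      · intro p hp
        exact ⟨hWX i hp.1, hp.2⟩
      · intro p hp
        refine ⟨?_, hp.2⟩
        exact mem_biInter fun Z hZ => hXPsub Z hZ i hp
    -- code W = code X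
    have hcodeW : code W = code X := by
      apply Subset.antisymm
      · rintro σ ⟨p, rfl⟩
        -- patterns of chain members at p form a finite nonempty chain
        set T : Set (Set (Fin n)) := (fun Z => pattern Z p) '' c with hT
        have hTne : T.Nonempty := ⟨_, Z₀, hZ₀c, rfl⟩
        have hTfin : T.Finite := Set.toFinite T
        have hTchain : IsChain (· ⊆ ·) T := by
          rintro _ ⟨Z₁, hZ₁, rfl⟩ _ ⟨Z₂, hZ₂, rfl⟩ _
          rcases hc.total hZ₁ hZ₂ with h | h
          · exact Or.inl fun i hi => h i hi
          · exact Or.inr fun i hi => h i hi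
        obtain ⟨m, hmT, hmmin⟩ : ∃ a ∈ T, ∀ a' ∈ T, id a' ≤ id a → id a = id a' := by
          obtain ⟨a, ha, h⟩ := hTfin.exists_minimalFor id T hTne
          exact ⟨a, ha, fun a' ha' h' => le_antisymm (h ha' h') h'⟩
        obtain ⟨Zm, hZmc, rfl⟩ := hmT
        have hmin : ∀ Z ∈ c, pattern Zm p ⊆ pattern Z p := by
          intro Z hZ
          rcases hTchain.total (mem_image_of_mem _ hZmc) (mem_image_of_mem _ hZ) with h | h
          · exact h
          · simpa using (hmmin _ (mem_image_of_mem _ hZ) h).le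
        have : pattern W p = pattern Zm p := by
          ext i
          simp only [pattern, mem_setOf_eq, hW, mem_iInter]
          constructor
          · exact fun h => h Zm hZmc
          · exact fun h Z hZ => hmin Z hZ h
        rw [this, ← (hcS hZmc).2.2.2.2]
        exact ⟨p, rfl⟩
      · exact fun σ hσ => codeX_sub W hWX hWint hσ
    refine ⟨W, ⟨hWcpt, hWcvx, hWX, hWint, hcodeW⟩, ?_⟩
    intro Z hZ i
    exact hWsub Z hZ i
  obtain ⟨Y, hYS, -, hYmin⟩ := zorn_min S key X hXS
  refine ⟨Y, hYS.1, hYS.2.1, hYS.2.2.1, hYS.2.2.2.1, hYS.2.2.2.2, ?_⟩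
  intro Z hZcpt hZcvx hZX hZP hZcode hZY j hZYj
  have hZS : Z ∈ S := ⟨hZcpt, hZcvx, hZX, hZP, hZcode⟩
  have := hYmin Z hZS (fun i => hZY i) j
  exact hZYj.2 this
end
end

section
/- Let C ⊆ ℝ² be a compact convex set, let p be a boundary point of C, and let B be a closed ball centered at p with boundary circle ∂B. Define the simplification of C relative to B as simpli(C, B) := (C \ B) ∪ cone_p(∂B ∩ C), where cone_p(A) := {α p + (1 − α) x : 0 ≤ α ≤ 1, x ∈ A} ∪ {p}. If ∂B ∩ C is a connected arc of the circle ∂B, then simpli(C, B) equals the convex hull of {p} ∪ (C \ interior B). -/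
open Set Metric

noncomputable section

/-- The cone over `A` with apex `p`. -/
def conePt {E : Type*} [AddCommGroup E] [Module ℝ E] (p : E) (A : Set E) : Set E :=
  {x | ∃ α : ℝ, 0 ≤ α ∧ α ≤ 1 ∧ ∃ a ∈ A, x = α • p + (1 - α) • a} ∪ {p}

/-- The simplification of `C` relative to the closed ball `B` of radius `r` centered
at the boundary point `p`:  `(C \ B) ∪ cone_p(∂B ∩ C)`. -/
def simpli (C : Set (EuclideanSpace ℝ (Fin 2))) (p : EuclideanSpace ℝ (Fin 2)) (r : ℝ) :
    Set (EuclideanSpace ℝ (Fin 2)) :=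
  (C \ Metric.closedBall p r) ∪ conePt p (Metric.sphere p r ∩ C)

local notation "E2" => EuclideanSpace ℝ (Fin 2)

lemma circle_conn {r : ℝ} (hr : 0 < r) {A : Set ℂ} (hA : IsPreconnected A)
    (hAs : A ⊆ sphere (0:ℂ) r) (hrA : (r:ℂ) ∉ A) {a b : ℂ}
    (ha : a ∈ A) (hb : b ∈ A) (hima : 0 < a.im) (himb : b.im < 0) : (-r : ℂ) ∈ A := by
  set φ : ℂ → ℝ := fun z => Complex.arg (-z) with hφ
  have habs : ∀ z ∈ A, ‖z‖ = r := by
    intro z hz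
    have := hAs hz
    rw [mem_sphere_zero_iff_norm] at this
    simpa using this
  have hcont : ContinuousOn φ A := by
    intro z hz
    have hslit : -z ∈ Complex.slitPlane := by
      rw [Complex.mem_slitPlane_iff]
      by_contra h
      push_neg at h
      obtain ⟨h1, h2⟩ := h
      have hzre : 0 ≤ z.re := by simpa using h1
      have hzim : z.im = 0 := by simpa using h2
      have : z = (z.re : ℂ) := by
        apply Complex.ext <;> simp [hzim]
      have hzr : z.re = r := by
        have h := habs z hz
        rw [this, Complex.norm_real, Real.norm_eq_abs, _root_.abs_of_nonneg hzre] at h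
        exact h
      have : z = (r : ℂ) := by rw [this, hzr]
      exact hrA (this ▸ hz)
    exact ((Complex.continuousAt_arg hslit).comp (continuous_neg.continuousAt)).continuousWithinAt
  have hφa : φ a < 0 := Complex.arg_neg_iff.2 (by simpa using hima)
  have hφb : 0 < φ b := by
    have h1 : 0 ≤ φ b := Complex.arg_nonneg_iff.2 (by simpa using himb.le)
    rcases h1.lt_or_eq with h | h
    · exact h
    · exfalso
      have := Complex.arg_eq_zero_iff.1 h.symm
      simp at this
      linarith [this.2]
  have h0 : (0:ℝ) ∈ Icc (φ a) (φ b) := ⟨hφa.le, hφb.le⟩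
  obtain ⟨m, hm, hφm⟩ := hA.intermediate_value ha hb hcont h0
  have := Complex.arg_eq_zero_iff.1 hφm
  obtain ⟨h1, h2⟩ := this
  have hmim : m.im = 0 := by simpa using h2
  have hmre : m.re ≤ 0 := by simpa using h1
  have habm : ‖m‖ = r := habs m hm
  have hm0 : m = (m.re : ℂ) := by apply Complex.ext <;> simp [hmim]
  have hmval : m.re = -r := by
    have h := habs m hm
    rw [hm0, Complex.norm_real, Real.norm_eq_abs] at h
    rcases abs_cases m.re with ⟨h', _⟩ | ⟨h', _⟩ <;> linarith
  have : m = (-r : ℂ) := by apply Complex.ext <;> simp [hmval, hmim]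
  exact this ▸ hm

lemma quad_aux {C : Set (EuclideanSpace ℝ (Fin 2))} (hC : Convex ℝ C)
    {p x1 x2 u z1 y v : EuclideanSpace ℝ (Fin 2)} {t m' az bz c A Bv : ℝ}
    (hx1 : x1 ∈ C) (hx2 : x2 ∈ C) (hy : y ∈ C)
    (hpu : p = x1 + t • u) (hu : u = x2 - x1)
    (ht' : 0 < t) (ht1 : t < 1) (hm't : m' ≤ t / 4) (hm't1 : m' ≤ (1 - t) / 4)
    (hv : v = A • u + Bv • z1) (hyz : y - p = az • u + bz • z1)
    (hc : c * bz = Bv) (hc0 : 0 ≤ c) (hA : |A| ≤ m') (hcaz : c * (1 + |az|) ≤ m') :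
    p + v ∈ C := by
  have hcm : c ≤ m' := by nlinarith [abs_nonneg az]
  have habsA := abs_le.1 hA
  have h1 : c * (t + az) ≤ m' := by nlinarith [le_abs_self az]
  have h2 : -m' ≤ c * (t + az) := by nlinarith [neg_abs_le az]
  set bb : ℝ := t + A - c * (t + az) with hbb
  set aa : ℝ := 1 - bb - c with haa
  have hbb0 : 0 ≤ bb := by rw [hbb]; linarith
  have haa0 : 0 ≤ aa := by rw [haa, hbb]; linarith
  have hyeq : y = x1 + t • u + az • u + bz • z1 := by
    have : y = p + (az • u + bz • z1) := by rw [← hyz]; module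
    rw [this, hpu]; module
  have hsum : aa + bb + c = 1 := by rw [haa]; ring
  have hmem : aa • x1 + bb • x2 + c • y ∈ C := by
    have h3 : (∑ i : Fin 3, (![aa, bb, c] i) • (![x1, x2, y] i)) ∈ C := by
      apply hC.sum_mem
      · intro i _
        fin_cases i <;> simp [haa0, hbb0, hc0]
      · rw [Fin.sum_univ_three]
        simpa using hsum
      · intro i _
        fin_cases i <;> simp [hx1, hx2, hy]
    rw [Fin.sum_univ_three] at h3
    simpa using h3
  have heq : aa • x1 + bb • x2 + c • y = p + v := by
    rw [hyeq, hv, hpu, hu, haa, hbb]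
    match_scalars
    · ring
    · ring
    · linear_combination hc
  rw [← heq]; exact hmem

set_option maxHeartbeats 1000000 in
lemma quad_interior {C : Set (EuclideanSpace ℝ (Fin 2))} (hC : Convex ℝ C)
    (f : EuclideanSpace ℝ (Fin 2) →ₗ[ℝ] ℝ)
    {p x1 x2 y1 y2 : EuclideanSpace ℝ (Fin 2)}
    (hx1 : x1 ∈ C) (hx2 : x2 ∈ C) (hy1 : y1 ∈ C) (hy2 : y2 ∈ C)
    (hps : p ∈ openSegment ℝ x1 x2) (hne : x1 ≠ x2)
    (hfx1 : f x1 = f p) (hfx2 : f x2 = f p)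
    (hfy1 : f p < f y1) (hfy2 : f y2 < f p) : p ∈ interior C := by
  obtain ⟨a', t, ha', ht', hab, hp⟩ := hps
  obtain ⟨u, hu⟩ : ∃ a : EuclideanSpace ℝ (Fin 2), a = x2 - x1 := ⟨_, rfl⟩
  have ht1 : t < 1 := by nlinarith
  have hpu : p = x1 + t • u := by
    rw [← hp, hu]
    have : a' = 1 - t := by linarith
    rw [this]; module
  have hfu : f u = 0 := by
    rw [hu, map_sub]; linarith
  obtain ⟨z1, hz1d⟩ : ∃ a : EuclideanSpace ℝ (Fin 2), a = y1 - p := ⟨_, rfl⟩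
  obtain ⟨z2, hz2d⟩ : ∃ a : EuclideanSpace ℝ (Fin 2), a = y2 - p := ⟨_, rfl⟩
  have hz1 : 0 < f z1 := by rw [hz1d, map_sub]; linarith
  have hz2 : f z2 < 0 := by rw [hz2d, map_sub]; linarith
  have hu0 : u ≠ 0 := by rw [hu]; exact sub_ne_zero.2 (Ne.symm hne)
  have hli : LinearIndependent ℝ ![u, z1] := by
    rw [LinearIndependent.pair_iff]
    intro s tt hst
    have h1 : f (s • u + tt • z1) = 0 := by rw [hst]; simp
    rw [map_add, map_smul, map_smul, smul_eq_mul, smul_eq_mul, hfu] at h1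
    have htt : tt = 0 := by
      rcases mul_eq_zero.1 (by linarith : tt * f z1 = 0) with h | h
      · exact h
      · exact absurd h (ne_of_gt hz1)
    refine ⟨?_, htt⟩
    rw [htt] at hst
    simp at hst
    rcases hst with h | h
    · exact h
    · exact absurd h hu0
  have hcard : Fintype.card (Fin 2) = Module.finrank ℝ (EuclideanSpace ℝ (Fin 2)) := by
    simp [finrank_euclideanSpace_fin]
  obtain ⟨b, hb0, hb1⟩ : ∃ b : Module.Basis (Fin 2) ℝ (EuclideanSpace ℝ (Fin 2)), b 0 = u ∧ b 1 = z1 :=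
    ⟨basisOfLinearIndependentOfCardEqFinrank hli hcard,
      by rw [coe_basisOfLinearIndependentOfCardEqFinrank]; rfl,
      by rw [coe_basisOfLinearIndependentOfCardEqFinrank]; rfl⟩
  have hco : ∀ v : E2, v = b.repr v 0 • u + b.repr v 1 • z1 := by
    intro v
    have h := b.sum_repr v
    rw [Fin.sum_univ_two, hb0, hb1] at h
    exact h.symm
  obtain ⟨α2, hα2⟩ : ∃ a, b.repr z2 0 = a := ⟨_, rfl⟩
  obtain ⟨β2, hβ2⟩ : ∃ a, b.repr z2 1 = a := ⟨_, rfl⟩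
  have hz2e : z2 = α2 • u + β2 • z1 := by rw [← hα2, ← hβ2]; exact hco z2
  have hβ2neg : β2 < 0 := by
    have h := congrArg f hz2e
    rw [map_add, map_smul, map_smul, smul_eq_mul, smul_eq_mul, hfu, mul_zero, zero_add] at h
    by_contra hcon
    push_neg at hcon
    nlinarith
  obtain ⟨m', hm'⟩ : ∃ a : ℝ, a = min t (1 - t) / 4 := ⟨_, rfl⟩
  have hm'pos : 0 < m' := by
    have h1 : 0 < min t (1 - t) := lt_min ht' (by linarith)
    rw [hm']; linarith
  have hm't : m' ≤ t / 4 := by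
    rw [hm']
    have := min_le_left t (1 - t); linarith
  have hm't1 : m' ≤ (1 - t) / 4 := by
    rw [hm']
    have := min_le_right t (1 - t); linarith
  have hcont0 : Continuous fun v : E2 => b.repr v 0 :=
    LinearMap.continuous_of_finiteDimensional ((b.coord 0 : E2 →ₗ[ℝ] ℝ))
  have hcont1 : Continuous fun v : E2 => b.repr v 1 :=
    LinearMap.continuous_of_finiteDimensional ((b.coord 1 : E2 →ₗ[ℝ] ℝ))
  obtain ⟨m, hmdef⟩ : ∃ a, min m' (m' * (-β2) / (1 + |α2|)) = a := ⟨_, rfl⟩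
  have hmpos : 0 < m := by
    rw [← hmdef]
    apply lt_min hm'pos
    apply div_pos (by nlinarith) (by positivity)
  have hmm' : m ≤ m' := by rw [← hmdef]; exact min_le_left _ _
  have hmle2 : m ≤ m' * (-β2) / (1 + |α2|) := by rw [← hmdef]; exact min_le_right _ _
  have hball : ∃ ε > 0, ∀ v : E2, ‖v‖ < ε → |b.repr v 0| < m ∧ |b.repr v 1| < m := by
    obtain ⟨d0, hd0, hball0⟩ := Metric.continuousAt_iff.1 hcont0.continuousAt m hmpos
    obtain ⟨d1, hd1, hball1⟩ := Metric.continuousAt_iff.1 hcont1.continuousAt m hmpos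
    refine ⟨min d0 d1, lt_min hd0 hd1, fun v hv => ⟨?_, ?_⟩⟩
    · have := hball0 (show dist v 0 < d0 by simpa using lt_of_lt_of_le hv (min_le_left _ _))
      simpa using this
    · have := hball1 (show dist v 0 < d1 by simpa using lt_of_lt_of_le hv (min_le_right _ _))
      simpa using this
  obtain ⟨ε, hε, hεball⟩ := hball
  apply interior_maximal _ (isOpen_ball (x := p) (ε := ε))
  · exact mem_ball_self hε
  · intro q hq
    obtain ⟨v, hvd⟩ : ∃ a, q - p = a := ⟨_, rfl⟩
    have hqv : q = p + v := by rw [← hvd]; abel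
    have hvn : ‖v‖ < ε := by
      rw [← hvd]
      have : dist q p < ε := mem_ball.1 hq
      rwa [dist_eq_norm] at this
    obtain ⟨hA', hB'⟩ := hεball v hvn
    obtain ⟨A, hAd⟩ : ∃ a, b.repr v 0 = a := ⟨_, rfl⟩
    obtain ⟨Bv, hBd⟩ : ∃ a, b.repr v 1 = a := ⟨_, rfl⟩
    rw [hAd] at hA'
    rw [hBd] at hB'
    have hv : v = A • u + Bv • z1 := by rw [← hAd, ← hBd]; exact hco v
    rw [hqv]
    by_cases hBv : 0 ≤ Bv
    · -- use y1 : az = 0, bz = 1, c = Bv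
      refine quad_aux hC hx1 hx2 hy1 hpu hu ht' ht1 hm't hm't1 hv
        (az := 0) (bz := 1) (c := Bv) (by rw [hz1d]; module) (by ring) hBv
        (le_trans hA'.le hmm') ?_
      have : Bv ≤ m' := le_trans (le_trans (le_abs_self Bv) hB'.le) hmm'
      simpa using this
    · -- use y2
      push_neg at hBv
      have hβ2ne : β2 ≠ 0 := ne_of_lt hβ2neg
      refine quad_aux hC hx1 hx2 hy2 hpu hu ht' ht1 hm't hm't1 hv
        (az := α2) (bz := β2) (c := Bv / β2) (by rw [← hz2d]; exact hz2e)
        (div_mul_cancel₀ Bv hβ2ne) (le_of_lt (div_pos_of_neg_of_neg hBv hβ2neg))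
        (le_trans hA'.le hmm') ?_
      have hBm' : -Bv < m := by rw [abs_of_neg hBv] at hB'; linarith
      have ha2 : (0:ℝ) < 1 + |α2| := by positivity
      have key := (le_div_iff₀ ha2).1 hmle2
      rw [div_mul_eq_mul_div, div_le_iff_of_neg hβ2neg]
      nlinarith [key, hBm', ha2]

set_option maxHeartbeats 1000000 in
lemma key_cone {C : Set (EuclideanSpace ℝ (Fin 2))} (hCcvx : Convex ℝ C)
    {p : EuclideanSpace ℝ (Fin 2)} (hpC : p ∈ C) (hpi : p ∉ interior C)
    {r : ℝ} (hr : 0 < r) (harc : IsPreconnected (sphere p r ∩ C))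
    {a b x z : EuclideanSpace ℝ (Fin 2)} (ha : a ∈ C) (hb : b ∈ C)
    (hra : r ≤ dist a p) (hrb : r ≤ dist b p)
    (hx : x ∈ segment ℝ a b) (hz : z ∈ segment ℝ p x) (hzr : dist z p ≤ r) :
    z ∈ conePt p (sphere p r ∩ C) := by
  by_cases hzp : z = p
  · exact Or.inr hzp
  have hxC : x ∈ C := hCcvx.segment_subset ha hb hx
  obtain ⟨cz, dz, hcz, hdz, hcd, hzeq⟩ := hz
  have hzsub : z - p = dz • (x - p) := by
    rw [← hzeq]
    have hc1 : cz = 1 - dz := by linarith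
    rw [hc1]; module
  have hsxpos : (0:ℝ) < ‖x - p‖ := by
    rcases eq_or_lt_of_le (norm_nonneg (x - p)) with h | h
    · exfalso
      apply hzp
      have : x - p = 0 := by
        rwa [eq_comm, norm_eq_zero] at h
      have hz0 : z - p = 0 := by rw [hzsub, this, smul_zero]
      have := sub_eq_zero.1 hz0
      exact this
    · exact h
  obtain ⟨sx, hsx⟩ : ∃ s : ℝ, ‖x - p‖ = s := ⟨_, rfl⟩
  have hsxpos' : 0 < sx := hsx ▸ hsxpos
  have hdzpos : 0 < dz := by
    rcases eq_or_lt_of_le hdz with h | h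
    · exfalso; apply hzp; rw [← hzeq, ← h]
      have hc1 : cz = 1 := by linarith
      rw [hc1]; module
    · exact h
  have hznorm : ‖z - p‖ = dz * sx := by
    rw [hzsub, norm_smul, Real.norm_eq_abs, abs_of_pos hdzpos, hsx]
  have hzr' : dz * sx ≤ r := by
    rw [← hznorm]
    rwa [dist_eq_norm] at hzr
  -- main claim : the sphere point in the direction of x is in C
  suffices hW : ∃ w : EuclideanSpace ℝ (Fin 2), (w ∈ sphere p r ∩ C) ∧ x - p = (sx / r) • (w - p) by
    obtain ⟨w, hwSC, hwx⟩ := hW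
    refine Or.inl ⟨1 - dz * sx / r, by rw [sub_nonneg, div_le_one hr]; exact hzr',
      by have h0 : 0 ≤ dz * sx / r := by positivity
         linarith, w, hwSC, ?_⟩
    have hzw : z - p = (dz * sx / r) • (w - p) := by
      rw [hzsub, hwx, smul_smul]
      congr 1
      field_simp
    have : z = p + (dz * sx / r) • (w - p) := by
      rw [← hzw]; abel
    rw [this]; module
  obtain ⟨w, hwdef⟩ : ∃ w : EuclideanSpace ℝ (Fin 2), p + (r / sx) • (x - p) = w := ⟨_, rfl⟩
  have hwx : x - p = (sx / r) • (w - p) := by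
    rw [← hwdef]
    rw [show p + (r / sx) • (x - p) - p = (r / sx) • (x - p) by abel, smul_smul]
    rw [show sx / r * (r / sx) = 1 by field_simp]
    rw [one_smul]
  have hwnorm : ‖w - p‖ = r := by
    rw [← hwdef, show p + (r / sx) • (x - p) - p = (r / sx) • (x - p) by abel,
      norm_smul, Real.norm_eq_abs, abs_of_pos (by positivity : (0:ℝ) < r / sx), hsx]
    field_simp
  have hwS : w ∈ sphere p r := by
    rwa [mem_sphere, dist_eq_norm]
  refine ⟨w, ⟨hwS, ?_⟩, hwx⟩
  -- now show w ∈ C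
  by_cases hsxr : r ≤ sx
  · -- w lies on the segment [p, x] ⊆ C
    have hw_seg : w ∈ segment ℝ p x := by
      refine ⟨1 - r / sx, r / sx, ?_, by positivity, by ring, ?_⟩
      · have : r / sx ≤ 1 := by
          rw [div_le_one hsxpos']; exact hsxr
        linarith
      · rw [← hwdef]; module
    exact hCcvx.segment_subset hpC hxC hw_seg
  push_neg at hsxr
  by_contra hwC
  exfalso
  -- IVT to find sphere points a1 b1 on segment [a,b] around x
  obtain ⟨ca, cb, hca, hcb, hcab, hxeq⟩ := hx
  have hγcont : Continuous fun τ : ℝ => dist (a + τ • (b - a)) p :=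
    ((continuous_const.add (continuous_id.smul continuous_const)).dist continuous_const)
  have hγx : a + cb • (b - a) = x := by
    rw [← hxeq]
    have : ca = 1 - cb := by linarith
    rw [this]; module
  have hdx : dist x p = sx := by rw [dist_eq_norm, hsx]
  have hiv1 : r ∈ Icc (dist (a + cb • (b-a)) p) (dist (a + (0:ℝ) • (b-a)) p) := by
    constructor
    · rw [hγx, hdx]; exact le_of_lt hsxr
    · simpa using hra
  have hiv2 : r ∈ Icc (dist (a + cb • (b-a)) p) (dist (a + (1:ℝ) • (b-a)) p) := by
    constructor
    · rw [hγx, hdx]; exact le_of_lt hsxr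
    · have : a + (1:ℝ) • (b - a) = b := by module
      rw [this]; exact hrb
  obtain ⟨t1, ht1mem, ht1⟩ := intermediate_value_Icc' hcb hγcont.continuousOn hiv1
  obtain ⟨t2, ht2mem, ht2⟩ := intermediate_value_Icc (by linarith : cb ≤ 1) hγcont.continuousOn hiv2
  obtain ⟨a1, ha1def⟩ : ∃ y : EuclideanSpace ℝ (Fin 2), a + t1 • (b - a) = y := ⟨_, rfl⟩
  obtain ⟨b1, hb1def⟩ : ∃ y : EuclideanSpace ℝ (Fin 2), a + t2 • (b - a) = y := ⟨_, rfl⟩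
  have ht1' : dist a1 p = r := by rw [← ha1def]; exact ht1
  have ht2' : dist b1 p = r := by rw [← hb1def]; exact ht2
  have hseg_mem : ∀ τ : ℝ, 0 ≤ τ → τ ≤ 1 → ∀ y : EuclideanSpace ℝ (Fin 2),
      a + τ • (b - a) = y → y ∈ C := by
    intro τ h0 h1 y hy
    apply hCcvx.segment_subset ha hb
    exact ⟨1 - τ, τ, by linarith, h0, by ring, by rw [← hy]; module⟩
  have ha1C : a1 ∈ C := hseg_mem t1 ht1mem.1 (by linarith [ht1mem.2]) a1 ha1def
  have hb1C : b1 ∈ C := hseg_mem t2 (by linarith [ht2mem.1]) ht2mem.2 b1 hb1def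
  have ha1S : a1 ∈ sphere p r := by rw [mem_sphere]; exact ht1'
  have hb1S : b1 ∈ sphere p r := by rw [mem_sphere]; exact ht2'
  -- x ∈ segment a1 b1
  have ht1cb : t1 ≤ cb := ht1mem.2
  have hcbt2 : cb ≤ t2 := ht2mem.1
  have hxseg : x ∈ segment ℝ a1 b1 := by
    rcases eq_or_lt_of_le (le_trans ht1cb hcbt2) with heq | hlt
    · exfalso
      have hteq : t1 = cb := le_antisymm ht1cb (heq ▸ hcbt2)
      have hax : a1 = x := by rw [← ha1def, hteq, hγx]
      rw [hax, hdx] at ht1'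
      exact absurd ht1' (ne_of_lt hsxr)
    · obtain ⟨θ, hθdef⟩ : ∃ θ : ℝ, (cb - t1)/(t2 - t1) = θ := ⟨_, rfl⟩
      have htne : t2 - t1 ≠ 0 := by intro h; rw [sub_eq_zero] at h; exact absurd h.symm (ne_of_lt hlt)
      have hθ0 : 0 ≤ θ := by rw [← hθdef]; apply div_nonneg (by linarith) (by linarith)
      have hθ1 : θ ≤ 1 := by
        rw [← hθdef, div_le_one (by linarith)]
        linarith
      have hscal : (1 - θ) * t1 + θ * t2 = cb := by
        rw [← hθdef]
        field_simp
        ring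
      refine ⟨1 - θ, θ, by linarith, hθ0, by ring, ?_⟩
      rw [← ha1def, ← hb1def, ← hγx]
      match_scalars
      · linear_combination -hscal
      · linear_combination hscal
  -- set up the similarity map to ℂ
  obtain ⟨e⟩ : Nonempty (EuclideanSpace ℝ (Fin 2) ≃ₗᵢ[ℝ] ℂ) :=
    ⟨Complex.orthonormalBasisOneI.repr.symm⟩
  have hnorm_e : ∀ y1 y2 : EuclideanSpace ℝ (Fin 2), ‖e y1 - e y2‖ = ‖y1 - y2‖ := by
    intro y1 y2
    rw [← map_sub, e.norm_map]
  have hewp : e w - e p ≠ 0 := by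
    intro h
    have h2 := hnorm_e w p
    rw [h] at h2
    simp at h2
    rw [hwnorm] at h2
    exact (ne_of_gt hr) h2.symm
  obtain ⟨cc, hccdef⟩ : ∃ c : ℂ, (r:ℂ) / (e w - e p) = c := ⟨_, rfl⟩
  have hccne : cc ≠ 0 := by
    rw [← hccdef]
    apply div_ne_zero _ hewp
    exact_mod_cast ne_of_gt hr
  have habscc : ‖cc‖ = 1 := by
    rw [← hccdef, norm_div, Complex.norm_real, Real.norm_eq_abs, abs_of_pos hr, hnorm_e w p, hwnorm,
      div_self (ne_of_gt hr)]
  obtain ⟨ψ, hψdef⟩ : ∃ ψ : EuclideanSpace ℝ (Fin 2) → ℂ, (fun y => cc * (e y - e p)) = ψ :=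
    ⟨_, rfl⟩
  have hψ : ∀ y, ψ y = cc * (e y - e p) := fun y => by rw [← hψdef]
  have hψabs : ∀ y : EuclideanSpace ℝ (Fin 2), ‖ψ y‖ = ‖y - p‖ := by
    intro y; rw [hψ, norm_mul, habscc, one_mul, hnorm_e]
  have hψinj : ∀ y1 y2, ψ y1 = ψ y2 → y1 = y2 := by
    intro y1 y2 h
    rw [hψ, hψ] at h
    have h2 := mul_left_cancel₀ hccne h
    have h3 : e y1 = e y2 := sub_left_inj.1 h2
    exact e.injective h3
  have hccw : cc * (e w - e p) = (r:ℂ) := by rw [← hccdef]; field_simp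
  have hψw : ψ w = r := by rw [hψ]; exact hccw
  obtain ⟨w', hw'def⟩ : ∃ y : EuclideanSpace ℝ (Fin 2), p + (p - w) = y := ⟨_, rfl⟩
  have hw'p : w' - p = -(w - p) := by rw [← hw'def]; abel
  have hψw' : ψ w' = -r := by
    rw [hψ]
    have he : e w' - e p = -(e w - e p) := by
      rw [← map_sub, ← map_sub, hw'p, map_neg]
    rw [he, mul_neg, hccw]
  have hw'norm : dist w' p = r := by
    rw [dist_eq_norm, hw'p, norm_neg, hwnorm]
  have hψcombo : ∀ (c1 c2 : ℝ) (y1 y2 : EuclideanSpace ℝ (Fin 2)), c1 + c2 = 1 →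
      ψ (c1 • y1 + c2 • y2) = c1 • ψ y1 + c2 • ψ y2 := by
    intro c1 c2 y1 y2 hc
    rw [hψ, hψ, hψ]
    have he : e (c1 • y1 + c2 • y2) = c1 • e y1 + c2 • e y2 := by
      rw [map_add, map_smul, map_smul]
    rw [he]
    have hc' : (c1 : ℂ) + c2 = 1 := by exact_mod_cast hc
    simp only [Complex.real_smul]
    linear_combination (cc * e p) * hc'
  have hψim : ∀ (c1 c2 : ℝ) (y1 y2 : EuclideanSpace ℝ (Fin 2)), c1 + c2 = 1 →
      (ψ (c1 • y1 + c2 • y2)).im = c1 * (ψ y1).im + c2 * (ψ y2).im := by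
    intro c1 c2 y1 y2 hc
    rw [hψcombo c1 c2 y1 y2 hc, Complex.add_im, Complex.smul_im, Complex.smul_im,
      smul_eq_mul, smul_eq_mul]
  have hψx : ψ x = ((sx : ℝ) : ℂ) := by
    rw [hψ]
    have hex : e x - e p = (sx / r) • (e w - e p) := by
      rw [← map_sub, ← map_sub, hwx, map_smul]
    rw [hex, Complex.real_smul]
    rw [show cc * (((sx / r : ℝ) : ℂ) * (e w - e p)) = ((sx / r : ℝ) : ℂ) * (cc * (e w - e p))
      by ring, hccw]
    have hrne : (r:ℂ) ≠ 0 := by exact_mod_cast ne_of_gt hr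
    push_cast
    field_simp
  have hψxim : (ψ x).im = 0 := by rw [hψx]; simp
  have him0 : ∀ y : EuclideanSpace ℝ (Fin 2), dist y p = r → (ψ y).im = 0 → y = w ∨ y = w' := by
    intro y hyd hyim
    have habsy : ‖ψ y‖ = r := by rw [hψabs, ← dist_eq_norm, hyd]
    have hre : ψ y = (((ψ y).re : ℝ) : ℂ) := by
      apply Complex.ext <;> simp [hyim]
    have habsr : |(ψ y).re| = r := by rw [hre, Complex.norm_real, Real.norm_eq_abs] at habsy; exact habsy
    rcases abs_cases ((ψ y).re) with ⟨h1, _⟩ | ⟨h1, _⟩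
    · left
      apply hψinj
      have hrr : (ψ y).re = r := by rw [h1] at habsr; exact habsr
      rw [hre, hrr, hψw]
    · right
      apply hψinj
      have hrr : (ψ y).re = -r := by rw [h1] at habsr; linarith
      rw [hre, hrr, hψw']
      push_cast
      ring
  have hψcont : Continuous ψ := by
    rw [← hψdef]
    exact continuous_const.mul ((e.continuous).sub continuous_const)
  have hAsub : ψ '' (sphere p r ∩ C) ⊆ sphere (0:ℂ) r := by
    rintro - ⟨y, ⟨hyS, hyC⟩, rfl⟩
    rw [mem_sphere_zero_iff_norm, hψabs, ← dist_eq_norm]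
    exact mem_sphere.1 hyS
  have hrnot : (r:ℂ) ∉ ψ '' (sphere p r ∩ C) := by
    rintro ⟨y, ⟨hyS, hyC⟩, hy⟩
    have : y = w := hψinj _ _ (by rw [hy, hψw])
    rw [this] at hyC
    exact hwC hyC
  have main : ∀ aa bb : EuclideanSpace ℝ (Fin 2), aa ∈ sphere p r → aa ∈ C →
      bb ∈ sphere p r → bb ∈ C → 0 < (ψ aa).im → (ψ bb).im < 0 → False := by
    intro aa bb haaS haaC hbbS hbbC hima himb
    have hconn' : IsPreconnected (ψ '' (sphere p r ∩ C)) := harc.image ψ hψcont.continuousOn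
    have hmem : (-r : ℂ) ∈ ψ '' (sphere p r ∩ C) :=
      circle_conn hr hconn' hAsub hrnot ⟨aa, ⟨haaS, haaC⟩, rfl⟩ ⟨bb, ⟨hbbS, hbbC⟩, rfl⟩ hima himb
    obtain ⟨mpt, ⟨hmS, hmC⟩, hmψ⟩ := hmem
    have hmw' : mpt = w' := hψinj _ _ (by rw [hmψ, hψw'])
    rw [hmw'] at hmC
    obtain ⟨fL, hfL⟩ : ∃ f : EuclideanSpace ℝ (Fin 2) →ₗ[ℝ] ℝ, ∀ y, f y = (cc * e y).im := by
      refine ⟨{ toFun := fun y => (cc * e y).im, map_add' := ?_, map_smul' := ?_ }, fun y => rfl⟩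
      · intro y1 y2
        show (cc * e (y1 + y2)).im = (cc * e y1).im + (cc * e y2).im
        rw [map_add, mul_add, Complex.add_im]
      · intro c y
        simp only [map_smul, Complex.real_smul, RingHom.id_apply, smul_eq_mul]
        rw [show cc * ((c:ℂ) * e y) = (c:ℂ) * (cc * e y) by ring]
        simp [Complex.mul_im]
    have hfψ : ∀ y, fL y - fL p = (ψ y).im := by
      intro y
      rw [hfL, hfL, hψ, mul_sub, Complex.sub_im]
    have hrsx : 0 < r + sx := by linarith
    have hps : p ∈ openSegment ℝ w' x := by
      refine ⟨sx / (r + sx), r / (r + sx), by positivity, by positivity, by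
        field_simp
        ring, ?_⟩
      have hw'e : w' = p - (r / sx) • (x - p) := by
        rw [← hw'def, ← hwdef]; abel
      rw [hw'e]
      match_scalars <;> (field_simp; ring)
    have hne' : w' ≠ x := by
      intro h
      rw [h, hdx] at hw'norm
      exact (ne_of_lt hsxr) hw'norm
    have h1 : fL w' = fL p := by
      have h := hfψ w'
      rw [hψw'] at h
      simp at h
      linarith
    have h2 : fL x = fL p := by
      have h := hfψ x
      rw [hψxim] at h
      linarith
    have h3 : fL p < fL aa := by have h := hfψ aa; linarith
    have h4 : fL bb < fL p := by have h := hfψ bb; linarith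
    exact hpi (quad_interior hCcvx fL hmC hxC haaC hbbC hps hne' h1 h2 h3 h4)
  obtain ⟨c1, c2, hc1, hc2, hc12, hxeq2⟩ := hxseg
  have hrel : c1 * (ψ a1).im + c2 * (ψ b1).im = 0 := by
    rw [← hψim c1 c2 a1 b1 hc12, hxeq2, hψxim]
  have hc1pos : 0 < c1 := by
    rcases eq_or_lt_of_le hc1 with h | h
    · exfalso
      have hxb : x = b1 := by
        rw [← hxeq2, ← h]
        have h2 : c2 = 1 := by linarith
        rw [h2]; module
      rw [hxb, ht2'] at hdx
      exact (ne_of_lt hsxr) hdx.symm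
    · exact h
  have hc2pos : 0 < c2 := by
    rcases eq_or_lt_of_le hc2 with h | h
    · exfalso
      have hxa : x = a1 := by
        rw [← hxeq2, ← h]
        have h2 : c1 = 1 := by linarith
        rw [h2]; module
      rw [hxa, ht1'] at hdx
      exact (ne_of_lt hsxr) hdx.symm
    · exact h
  rcases lt_trichotomy ((ψ a1).im) 0 with hneg | hzero | hpos
  · have hbpos : 0 < (ψ b1).im := by nlinarith
    exact main b1 a1 hb1S hb1C ha1S ha1C hbpos hneg
  · have hbzero : (ψ b1).im = 0 := by
      rw [hzero, mul_zero] at hrel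
      have h5 : c2 * (ψ b1).im = 0 := by linarith
      rcases mul_eq_zero.1 h5 with h | h
      · exact absurd h (ne_of_gt hc2pos)
      · exact h
    have ha1w' : a1 = w' := by
      rcases him0 a1 ht1' hzero with h | h
      · exfalso; rw [h] at ha1C; exact hwC ha1C
      · exact h
    have hb1w' : b1 = w' := by
      rcases him0 b1 ht2' hbzero with h | h
      · exfalso; rw [h] at hb1C; exact hwC hb1C
      · exact h
    have hxw' : x = w' := by
      rw [← hxeq2, ha1w', hb1w', ← add_smul, hc12, one_smul]
    rw [hxw', hw'norm] at hdx
    exact (ne_of_lt hsxr) hdx.symm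
  · have hbneg : (ψ b1).im < 0 := by nlinarith
    exact main a1 b1 ha1S ha1C hb1S hb1C hpos hbneg

set_option maxHeartbeats 1000000 in
/-- If `C ⊆ ℝ²` is compact convex, `p` is a boundary point of `C`, `B` is a closed ball
centered at `p`, and `∂B ∩ C` is a connected arc of the circle `∂B`, then the
simplification of `C` relative to `B` is the convex hull of `{p} ∪ (C \ interior B)`. -/
theorem simplification_eq_convexHull
    (C : Set (EuclideanSpace ℝ (Fin 2))) (hCcpt : IsCompact C) (hCcvx : Convex ℝ C)
    (p : EuclideanSpace ℝ (Fin 2)) (hp : p ∈ frontier C)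
    (r : ℝ) (hr : 0 < r)
    (harc : IsConnected (Metric.sphere p r ∩ C)) :
    simpli C p r = convexHull ℝ ({p} ∪ (C \ interior (Metric.closedBall p r))) := by
  have hCcl : IsClosed C := hCcpt.isClosed
  have hpC : p ∈ C := by
    have := frontier_subset_closure (s := C) hp
    rwa [hCcl.closure_eq] at this
  have hpi : p ∉ interior C := by
    rw [hCcl.frontier_eq] at hp
    exact hp.2
  have hint : interior (Metric.closedBall p r) = ball p r := interior_closedBall p (ne_of_gt hr)
  set T : Set (EuclideanSpace ℝ (Fin 2)) := {p} ∪ (C \ interior (Metric.closedBall p r)) with hT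
  -- points of T: p, or in C at distance ≥ r
  have hTmem : ∀ q ∈ T, q ∈ C ∧ (q = p ∨ r ≤ dist q p) := by
    intro q hq
    rcases hq with hq | ⟨hqC, hqb⟩
    · rw [mem_singleton_iff] at hq
      exact ⟨hq ▸ hpC, Or.inl hq⟩
    · rw [hint, mem_ball, not_lt] at hqb
      exact ⟨hqC, Or.inr hqb⟩
  obtain ⟨a0, ha0S, ha0C⟩ := harc.nonempty
  have ha0r : dist a0 p = r := mem_sphere.1 ha0S
  -- representation of points of simpli
  have hrepr : ∀ q ∈ simpli C p r, ∃ aq, aq ∈ C ∧ r ≤ dist aq p ∧ q ∈ segment ℝ p aq := by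
    intro q hq
    rcases hq with ⟨hqC, hqB⟩ | hcone
    · refine ⟨q, hqC, ?_, ?_⟩
      · rw [mem_closedBall, not_le] at hqB
        exact le_of_lt hqB
      · exact right_mem_segment ℝ p q
    · rcases hcone with ⟨α, h0, h1, aq, ⟨haS, haC⟩, hqeq⟩ | hqp
      · refine ⟨aq, haC, le_of_eq (mem_sphere.1 haS).symm, α, 1 - α, h0, by linarith, by ring, ?_⟩
        rw [hqeq]
      · rw [mem_singleton_iff] at hqp
        exact ⟨a0, ha0C, le_of_eq ha0r.symm, hqp ▸ left_mem_segment ℝ p a0⟩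
  have hsimpC : simpli C p r ⊆ C := by
    intro q hq
    obtain ⟨aq, haqC, _, hseg⟩ := hrepr q hq
    exact hCcvx.segment_subset hpC haqC hseg
  apply Subset.antisymm
  · -- simpli ⊆ hull
    intro q hq
    have hpT : p ∈ T := Or.inl rfl
    rcases hq with ⟨hqC, hqB⟩ | hcone
    · apply subset_convexHull ℝ T
      refine Or.inr ⟨hqC, ?_⟩
      rw [hint, mem_ball]
      rw [mem_closedBall, not_le] at hqB
      linarith
    · rcases hcone with ⟨α, h0, h1, aq, ⟨haS, haC⟩, hqeq⟩ | hqp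
      · have haT : aq ∈ T := by
          refine Or.inr ⟨haC, ?_⟩
          rw [hint, mem_ball]
          rw [mem_sphere] at haS
          linarith [haS.ge]
        apply segment_subset_convexHull hpT haT
        exact ⟨α, 1 - α, h0, by linarith, by ring, hqeq.symm⟩
      · rw [mem_singleton_iff] at hqp
        exact subset_convexHull ℝ T (hqp ▸ hpT)
  · -- hull ⊆ simpli
    apply convexHull_min
    · intro q hq
      obtain ⟨hqC, hqd⟩ := hTmem q hq
      rcases hqd with rfl | hqd
      · exact Or.inr (Or.inr rfl)
      · rcases eq_or_lt_of_le hqd with heq | hlt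
        · exact Or.inr (Or.inl ⟨0, le_refl 0, zero_le_one, q, ⟨by rwa [mem_sphere, eq_comm], hqC⟩,
            by simp⟩)
        · exact Or.inl ⟨hqC, by rw [mem_closedBall, not_le]; exact hlt⟩
    · -- convexity of simpli
      intro u hu v hv su sv hsu hsv hsum
      obtain ⟨au, hauC, haur, ⟨cu, du, hcu, hdu, hcdu, hueq⟩⟩ := hrepr u hu
      obtain ⟨av, havC, havr, ⟨cv, dv, hcv, hdv, hcdv, hveq⟩⟩ := hrepr v hv
      obtain ⟨zz, hzz⟩ : ∃ y : EuclideanSpace ℝ (Fin 2), su • u + sv • v = y := ⟨_, rfl⟩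
      obtain ⟨c1, hc1⟩ : ∃ c : ℝ, su * du = c := ⟨_, rfl⟩
      obtain ⟨c2, hc2⟩ : ∃ c : ℝ, sv * dv = c := ⟨_, rfl⟩
      have hc1n : 0 ≤ c1 := by rw [← hc1]; positivity
      have hc2n : 0 ≤ c2 := by rw [← hc2]; positivity
      have hzzeq : zz = (su * cu + sv * cv) • p + c1 • au + c2 • av := by
        rw [← hzz, ← hueq, ← hveq, ← hc1, ← hc2]
        module
      by_cases hc12 : c1 + c2 = 0
      · have hc10 : c1 = 0 := by linarith
        have hc20 : c2 = 0 := by linarith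
        have hzzp : zz = p := by
          rw [hzzeq, hc10, hc20]
          have hone : su * cu + sv * cv = 1 := by
            have e1 : cu = 1 - du := by linarith
            have e2 : cv = 1 - dv := by linarith
            rw [e1, e2]
            have e3 : su * du = 0 := by rw [hc1, hc10]
            have e4 : sv * dv = 0 := by rw [hc2, hc20]
            nlinarith [e3, e4]
          rw [hone]
          module
        rw [hzz, hzzp]
        exact Or.inr (Or.inr rfl)
      · have hσpos : 0 < c1 + c2 := lt_of_le_of_ne (by linarith) (Ne.symm hc12)
        obtain ⟨x, hxdef⟩ : ∃ y : EuclideanSpace ℝ (Fin 2),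
            (c1 / (c1 + c2)) • au + (c2 / (c1 + c2)) • av = y := ⟨_, rfl⟩
        have hxseg : x ∈ segment ℝ au av :=
          ⟨c1 / (c1 + c2), c2 / (c1 + c2), by positivity, by positivity,
            by field_simp, hxdef⟩
        have hc0 : su * cu + sv * cv = 1 - (c1 + c2) := by
          have e1 : cu = 1 - du := by linarith
          have e2 : cv = 1 - dv := by linarith
          rw [e1, e2, ← hc1, ← hc2]
          nlinarith []
        have hzseg : zz ∈ segment ℝ p x := by
          refine ⟨1 - (c1 + c2), c1 + c2, ?_, le_of_lt hσpos, by ring, ?_⟩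
          · have h1 : c1 + c2 ≤ 1 := by
              have e1 : cu = 1 - du := by linarith
              nlinarith [hc0, mul_nonneg hsu hcu, mul_nonneg hsv hcv]
            linarith
          · rw [hzzeq, hc0, ← hxdef]
            match_scalars
            · ring
            · field_simp
            · field_simp
        rw [hzz]
        by_cases hzB : dist zz p ≤ r
        · exact Or.inr (key_cone hCcvx hpC hpi hr harc.isPreconnected hauC havC haur havr
            hxseg hzseg hzB)
        · left
          constructor
          · exact hCcvx.segment_subset hpC (hCcvx.segment_subset hauC havC hxseg) hzseg
          · rw [mem_closedBall]
            exact hzB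
end
end

section
/- Let U = (U_1, …, U_n) be a tuple of convex sets in ℝ^d and define X = (X_1, …, X_n) by X_i := closure(U_i). If c is a codeword of code(X) that is not a codeword of code(U), then the intersection ⋂_{i ∈ c} X_i has empty interior. -/
/-!
If `⋂ i ∈ c, closure (U i)` had an interior point `q`, then `q ∈ interior (U i)` for `i ∈ c`,
because a convex set in finite dimension has the same interior as its closure. Take `p` with
pattern `c` in the closures. Points of the open segment from `p` to `q` lie in `interior (U i)`
for `i ∈ c`, and those close enough to `p` stay outside the finitely many closed sets
`closure (U i)`, `i ∉ c`; such a point has pattern `c` in `U`.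
-/

open Set Filter Topology

noncomputable section

theorem Convex.interior_closure_eq_interior {E : Type*} [NormedAddCommGroup E]
    [NormedSpace ℝ E] [FiniteDimensional ℝ E] {s : Set E} (hs : Convex ℝ s) :
    interior (closure s) = interior s := by
  rcases (interior (closure s)).eq_empty_or_nonempty with h | h
  · rw [h]
    exact (subset_empty_iff.mp (h ▸ interior_mono subset_closure)).symm
  · apply hs.interior_closure_eq_interior_of_nonempty_interior
    rw [hs.interior_nonempty_iff_affineSpan_eq_top, ← top_le_iff,
      ← hs.closure.interior_nonempty_iff_affineSpan_eq_top.mp h]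
    exact affineSpan_le.mpr
      (closure_minimal (subset_affineSpan ℝ s) (affineSpan ℝ s).closed_of_finiteDimensional)

theorem exists_mem_openSegment_of_mem_nhds {E : Type*} [AddCommGroup E] [Module ℝ E]
    [TopologicalSpace E] [IsTopologicalAddGroup E] [ContinuousSMul ℝ E] {V : Set E} {p : E}
    (hV : V ∈ 𝓝 p) (q : E) : ∃ r ∈ openSegment ℝ p q, r ∈ V := by
  have hlim : Tendsto (AffineMap.lineMap p q) (𝓝[>] (0 : ℝ)) (𝓝 p) := by
    simpa using (AffineMap.lineMap_continuous (p := p) (q := q)).tendsto' 0 p (by simp)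
      |>.mono_left nhdsWithin_le_nhds
  obtain ⟨t, ht, htV⟩ : (Ioo 0 1 ∩ AffineMap.lineMap p q ⁻¹' V).Nonempty :=
    nonempty_of_mem (inter_mem (Ioo_mem_nhdsGT zero_lt_one) (hlim hV))
  refine ⟨AffineMap.lineMap p q t, ?_, htV⟩
  rw [openSegment_eq_image_lineMap]
  exact mem_image_of_mem _ ht

theorem exists_forall_mem_iff_mem_closure {ι E : Type*} [Finite ι] [AddCommGroup E]
    [Module ℝ E] [TopologicalSpace E] [IsTopologicalAddGroup E] [ContinuousSMul ℝ E]
    {U : ι → Set E} (hU : ∀ i, Convex ℝ (U i)) {p q : E}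
    (hq : ∀ i, p ∈ closure (U i) → q ∈ interior (U i)) :
    ∃ r, ∀ i, r ∈ U i ↔ p ∈ closure (U i) := by
  have hV : (⋂ i ∈ {i | p ∉ closure (U i)}, (closure (U i))ᶜ) ∈ 𝓝 p :=
    (biInter_mem (toFinite _)).mpr fun i hi => isClosed_closure.isOpen_compl.mem_nhds hi
  obtain ⟨r, hr, hrV⟩ := exists_mem_openSegment_of_mem_nhds hV q
  refine ⟨r, fun i => ⟨fun hri => ?_, fun hpi => ?_⟩⟩
  · by_contra hpi
    exact mem_iInter₂.mp hrV i hpi (subset_closure hri)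
  · rw [openSegment_symm] at hr
    exact interior_subset ((hU i).openSegment_interior_closure_subset_interior (hq i hpi) hpi hr)

/-- Let `U` be a tuple of convex sets in `ℝ^d` and let `X i := closure (U i)`.  If `c`
is a codeword of `code X` which is not a codeword of `code U`, then `⋂ i ∈ c, X i` has
empty interior. -/
theorem new_codewords_have_empty_interior {d n : ℕ}
    (U : Fin n → Set (EuclideanSpace ℝ (Fin d))) (hU : ∀ i, Convex ℝ (U i))
    (X : Fin n → Set (EuclideanSpace ℝ (Fin d))) (hX : ∀ i, X i = closure (U i))
    (c : Set (Fin n)) (hc : c ∈ code X) (hc' : c ∉ code U) :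
    interior (⋂ i ∈ c, X i) = ∅ := by
  obtain ⟨p, rfl⟩ := hc
  refine eq_empty_of_forall_notMem fun q hq => hc' ?_
  have hq' : ∀ i, p ∈ closure (U i) → q ∈ interior (U i) := fun i hpi => by
    rw [← (hU i).interior_closure_eq_interior, ← hX i]
    exact interior_mono (biInter_subset_of_mem (by simpa [pattern, hX i] using hpi)) hq
  obtain ⟨r, hr⟩ := exists_forall_mem_iff_mem_closure hU hq'
  exact ⟨r, ext fun i => by simpa [pattern, hX i] using hr i⟩
end
end

section
/- Let U = (U_1, …, U_n) be a tuple of bounded open convex sets in ℝ², let X = (X_1, …, X_n) with X_i := closure(U_i), and let X' = (X'_1, …, X'_n) be a tuple of compact convex sets with X'_i ⊆ X_i and code(X') = code(X) such that moreover: (1) for every codeword c ∈ code(U), each X'_i with i ∈ c contains the vertices of a triangle contained in ⋂_{i∈c} U_i whose interior contains a point p with pattern(U, p) = c, and (2) for every line L containing a nonempty set ⋂_{i∈σ} X_i of empty interior (σ ⊆ [n] nonempty) and every i with L ∩ U_i ≠ ∅, X'_i contains the four vertices of a quadrilateral contained in X_i having L ∩ X_i as one of its diagonals. Then the tuple U'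 = (U'_1, …, U'_n) with U'_i := interior(X'_i) satisfies code(U') = code(U). -/
open Set
open scoped RealInnerProductSpace

noncomputable section

local notation "E2" => EuclideanSpace ℝ (Fin 2)

/-- A line in the plane: an affine line `{a + t • w : t ∈ ℝ}` with direction `w ≠ 0`. -/
def IsLine (L : Set (EuclideanSpace ℝ (Fin 2))) : Prop :=
  ∃ a w : EuclideanSpace ℝ (Fin 2), w ≠ 0 ∧ L = {x | ∃ t : ℝ, x = a + t • w}



/-- interior of closure of an open convex set. -/
lemma aux_interior_closure {U : Set E2} (hU : IsOpen U) (hc : Convex ℝ U) :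
    interior (closure U) = U := by
  rcases U.eq_empty_or_nonempty with h | ⟨u, hu⟩
  · simp [h]
  apply subset_antisymm
  · intro x hx
    -- pick a point beyond x in the closure
    have hx' : x ∈ closure U := interior_subset hx
    obtain ⟨ε, hε, hball⟩ := Metric.isOpen_iff.1 isOpen_interior x hx
    by_cases hxu : x = u
    · exact hxu ▸ hu
    set y := x + (ε / (2 * ‖x - u‖)) • (x - u) with hy
    have hxu' : ‖x - u‖ ≠ 0 := by
      simp [sub_eq_zero, hxu]
    have hxupos : 0 < ‖x - u‖ := lt_of_le_of_ne (norm_nonneg _) (Ne.symm hxu')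
    have hyball : y ∈ Metric.ball x ε := by
      have : ‖y - x‖ = (ε / (2 * ‖x - u‖)) * ‖x - u‖ := by
        rw [hy]
        rw [add_sub_cancel_left, norm_smul]
        have : 0 ≤ ε / (2 * ‖x - u‖) := by positivity
        rw [Real.norm_eq_abs, abs_of_nonneg this]
      have hlt : ‖y - x‖ < ε := by
        rw [this]
        rw [div_mul_eq_mul_div, mul_comm (2:ℝ) ‖x-u‖, ← div_div, mul_div_assoc]
        rw [div_self hxu']
        linarith
      simpa [Metric.mem_ball, dist_eq_norm] using hlt
    have hycl : y ∈ closure U := interior_subset (hball hyball)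
    -- x is in the open segment from u to y
    have hmem : x ∈ openSegment ℝ u y := by
      set δ := ε / (2 * ‖x - u‖) with hδ
      have hδpos : 0 < δ := by positivity
      have h1δ : (1:ℝ) + δ ≠ 0 := by positivity
      refine ⟨δ / (1 + δ), 1 / (1 + δ), by positivity, by positivity, by field_simp; ring, ?_⟩
      rw [hy]
      match_scalars <;> field_simp <;> ring
    have := hc.openSegment_interior_closure_subset_interior
      (by rwa [hU.interior_eq]) hycl hmem
    exact hU.interior_eq ▸ this
  · exact hU.subset_interior_iff.2 subset_closure

/-- a point is in the open segment from `w` to a slightly stretched point. -/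
lemma aux_mem_openSegment_shift (w p : E2) {ε : ℝ} (hε : 0 < ε) :
    p ∈ openSegment ℝ w (p + ε • (p - w)) := by
  have h1 : (1:ℝ) + ε ≠ 0 := by positivity
  refine ⟨ε / (1 + ε), 1 / (1 + ε), by positivity, by positivity, by field_simp; ring, ?_⟩
  match_scalars <;> field_simp <;> ring

/-- limiting bound from strict bounds on combinations. -/
lemma aux_real_combo {A B α : ℝ} (h : ∀ θ : ℝ, 0 < θ → θ < 1 → α < (1-θ)*A + θ*B) :
    α ≤ B := by
  by_contra hB
  push_neg at hB
  rcases le_or_gt A α with hA | hA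
  · have := h (1/2) (by norm_num) (by norm_num)
    linarith
  · set θ := (A - α)/(A - B) with hθ
    have hAB : 0 < A - B := by linarith
    have h1 : 0 < θ := by apply div_pos <;> linarith
    have h2 : θ < 1 := by
      rw [hθ, div_lt_one hAB]; linarith
    have := h θ h1 h2
    have hval : (1-θ)*A + θ*B = α := by
      rw [hθ]; field_simp; ring
    linarith

/-- a convex set avoiding a hyperplane lies on one side. -/
lemma aux_convex_side {V : Set E2} (hV : Convex ℝ V) {g : E2} {α : ℝ}
    (hdisj : ∀ x ∈ V, ⟪g, x⟫ ≠ α) :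
    (∀ x ∈ V, α < ⟪g, x⟫) ∨ (∀ x ∈ V, ⟪g, x⟫ < α) := by
  by_contra hcon
  push_neg at hcon
  obtain ⟨⟨x₁, hx₁, hle₁⟩, ⟨x₂, hx₂, hle₂⟩⟩ := hcon
  set A₁ : ℝ := ⟪g, x₁⟫ with hA₁
  set A₂ : ℝ := ⟪g, x₂⟫ with hA₂
  have h₁ : A₁ < α := lt_of_le_of_ne hle₁ (hdisj _ hx₁)
  have h₂ : α < A₂ := lt_of_le_of_ne (by simpa using hle₂) (Ne.symm (hdisj _ hx₂))
  set θ := (A₂ - α)/(A₂ - A₁) with hθ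
  have hd : 0 < A₂ - A₁ := by linarith
  have h1 : 0 < θ := by apply div_pos <;> linarith
  have h2 : θ < 1 := by rw [hθ, div_lt_one hd]; linarith
  have hz : θ • x₁ + (1-θ) • x₂ ∈ V := hV hx₁ hx₂ (le_of_lt h1) (by linarith) (by ring)
  apply hdisj _ hz
  rw [inner_add_right, real_inner_smul_right, real_inner_smul_right, ← hA₁, ← hA₂]
  rw [hθ]
  have hd' : A₂ - A₁ ≠ 0 := ne_of_gt hd
  field_simp
  ring

/-- a convex set of reals avoiding `0` lies on one side. -/
lemma aux_real_convex_side {S : Set ℝ} (hS : Convex ℝ S) (h0 : (0:ℝ) ∉ S) :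
    (∀ t ∈ S, 0 < t) ∨ (∀ t ∈ S, t < 0) := by
  by_contra hcon
  push_neg at hcon
  obtain ⟨⟨t₁, ht₁, hle₁⟩, ⟨t₂, ht₂, hle₂⟩⟩ := hcon
  have h₁ : t₁ < 0 := lt_of_le_of_ne hle₁ (fun h => h0 (h ▸ ht₁))
  have h₂ : 0 < t₂ := lt_of_le_of_ne (by simpa using hle₂) (fun h => h0 (h.symm ▸ ht₂))
  set θ := t₂/(t₂ - t₁) with hθ
  have hd : 0 < t₂ - t₁ := by linarith
  have h1 : 0 < θ := by apply div_pos <;> linarith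
  have h2 : θ < 1 := by rw [hθ, div_lt_one hd]; linarith
  have hz : θ * t₁ + (1-θ) * t₂ ∈ S := hS ht₁ ht₂ (le_of_lt h1) (by linarith) (by ring)
  apply h0
  have : θ * t₁ + (1-θ) * t₂ = 0 := by rw [hθ]; field_simp; ring
  rwa [this] at hz

lemma aux_support {s : Set E2} (hs : Convex ℝ s) {p : E2}
    (hne : (interior s).Nonempty) (hp : p ∉ interior s) :
    ∃ y : E2, y ≠ 0 ∧ (∀ x ∈ s, ⟪y, x⟫ ≤ ⟪y, p⟫) ∧ ∀ x ∈ interior s, ⟪y, x⟫ < ⟪y, p⟫ := by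
  obtain ⟨f, hf⟩ := geometric_hahn_banach_open_point hs.interior isOpen_interior hp
  set y := (InnerProductSpace.toDual ℝ E2).symm f with hy
  have hyx : ∀ x : E2, ⟪y, x⟫ = f x := fun x => InnerProductSpace.toDual_symm_apply
  obtain ⟨w, hw⟩ := hne
  have hy0 : y ≠ 0 := by
    intro h0
    have h1 := hf w hw
    have h2 : f w = ⟪y, w⟫ := (hyx w).symm
    have h3 : f p = ⟪y, p⟫ := (hyx p).symm
    rw [h0] at h2 h3
    simp at h2 h3
    rw [h2, h3] at h1
    exact lt_irrefl 0 h1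
  refine ⟨y, hy0, ?_, fun x hx => by rw [hyx, hyx]; exact hf x hx⟩
  intro x hx
  rw [hyx, hyx]
  have key : ∀ θ : ℝ, 0 < θ → θ < 1 → (1-θ) * f w + θ * f x < f p := by
    intro θ h0 h1
    have hmem : (1-θ) • w + θ • x ∈ interior s :=
      hs.combo_interior_closure_mem_interior hw (subset_closure hx) (by linarith)
        (le_of_lt h0) (by ring)
    have := hf _ hmem
    simpa [map_add, map_smul, smul_eq_mul] using this
  have h2 : -(f p) ≤ -(f x) := by
    apply aux_real_combo (A := -(f w))
    intro θ h0 h1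
    have := key θ h0 h1
    nlinarith
  linarith

/-- normal vector to a line direction in the plane. -/
lemma aux_line_normal {w : E2} (hw : w ≠ 0) :
    ∃ g : E2, g ≠ 0 ∧ ⟪g, w⟫ = 0 ∧ ∀ v : E2, ⟪g, v⟫ = 0 → ∃ t : ℝ, v = t • w := by
  set g : E2 := (WithLp.equiv 2 (Fin 2 → ℝ)).symm ![-(w 1), w 0] with hgdef
  have hg0 : g 0 = -(w 1) := by rw [hgdef]; rfl
  have hg1 : g 1 = w 0 := by rw [hgdef]; rfl
  have hw01 : w 0 ≠ 0 ∨ w 1 ≠ 0 := by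
    by_contra h
    push_neg at h
    apply hw
    apply (WithLp.equiv 2 (Fin 2 → ℝ)).injective
    funext i
    fin_cases i <;> simp [h.1, h.2]
  have hinner : ∀ x v : E2, ⟪x, v⟫ = x 0 * v 0 + x 1 * v 1 := by
    intro x v
    rw [PiLp.inner_apply, Fin.sum_univ_two]
    simp [RCLike.inner_apply, conj_trivial]; ring
  refine ⟨g, ?_, ?_, ?_⟩
  · intro h0
    rcases hw01 with h | h
    · apply h; rw [← hg1, h0]; rfl
    · apply h; rw [← neg_eq_zero, ← hg0, h0]; rfl
  · rw [hinner, hg0, hg1]; ring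
  · intro v hv
    rw [hinner, hg0, hg1] at hv
    rcases eq_or_ne (w 0) 0 with h0 | h0
    · have h1 : w 1 ≠ 0 := by
        rcases hw01 with h | h
        · exact absurd h0 h
        · exact h
      have hv0 : v 0 = 0 := by
        rw [h0] at hv
        have : -(w 1) * v 0 = 0 := by linarith
        rcases mul_eq_zero.1 this with h | h
        · exact absurd (neg_eq_zero.1 h) h1
        · exact h
      refine ⟨v 1 / w 1, ?_⟩
      apply (WithLp.equiv 2 (Fin 2 → ℝ)).injective
      funext i
      fin_cases i
      · show v 0 = (v 1 / w 1) • w 0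
        rw [hv0, h0]; simp
      · show v 1 = (v 1 / w 1) • w 1
        rw [smul_eq_mul, div_mul_cancel₀ _ h1]
    · refine ⟨v 0 / w 0, ?_⟩
      apply (WithLp.equiv 2 (Fin 2 → ℝ)).injective
      funext i
      fin_cases i
      · show v 0 = (v 0 / w 0) • w 0
        rw [smul_eq_mul, div_mul_cancel₀ _ h0]
      · show v 1 = (v 0 / w 0) • w 1
        rw [smul_eq_mul]
        field_simp
        nlinarith [hv]

/-- a convex set with empty interior in the plane lies on a line. -/
lemma aux_thin_line {S : Set E2} (hS : Convex ℝ S) (hint : interior S = ∅)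
    {p q : E2} (hp : p ∈ S) (hq : q ∈ S) (hpq : p ≠ q) :
    ∀ z ∈ S, ∃ t : ℝ, z = p + t • (q - p) := by
  intro z hz
  by_contra hno
  push_neg at hno
  set v₁ := q - p with hv₁
  set v₂ := z - p with hv₂
  have hv₁0 : v₁ ≠ 0 := sub_ne_zero.2 (Ne.symm hpq)
  have hind : LinearIndependent ℝ ![v₁, v₂] := by
    rw [LinearIndependent.pair_iff]
    intro s t hst
    by_cases ht : t = 0
    · subst ht
      refine ⟨?_, rfl⟩
      simp only [zero_smul, add_zero] at hst
      rcases smul_eq_zero.1 hst with h | h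
      · exact h
      · exact absurd h hv₁0
    · exfalso
      apply hno (-(s/t))
      have h3 : t • v₂ = -(s • v₁) := by
        rw [eq_neg_iff_add_eq_zero, add_comm]; exact hst
      have h4 : t • v₂ = t • ((-(s/t)) • v₁) := by
        rw [h3, smul_smul, show t * (-(s/t)) = -s by field_simp, neg_smul]
      have h2 : v₂ = (-(s/t)) • v₁ := smul_right_injective E2 ht h4
      have : p + (-(s/t)) • v₁ = z := by rw [← h2, hv₂]; abel
      exact this.symm
  have hcard : Fintype.card (Fin 2) = Module.finrank ℝ E2 := by
    simp [finrank_euclideanSpace_fin]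
  obtain ⟨b, hbcoe⟩ : ∃ b : Module.Basis (Fin 2) ℝ E2, ⇑b = ![v₁, v₂] :=
    ⟨basisOfLinearIndependentOfCardEqFinrank hind hcard,
      coe_basisOfLinearIndependentOfCardEqFinrank _ _⟩
  have hb0 : b 0 = v₁ := by rw [hbcoe]; rfl
  have hb1 : b 1 = v₂ := by rw [hbcoe]; rfl
  set φ : E2 → (Fin 2 → ℝ) := fun x => b.equivFun (x - p) with hφ
  have hφcont : Continuous φ := by
    apply Continuous.comp
    · exact LinearMap.continuous_of_finiteDimensional b.equivFun.toLinearMap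
    · exact continuous_id.sub continuous_const
  set A := {x : E2 | 0 < φ x 0 ∧ 0 < φ x 1 ∧ φ x 0 + φ x 1 < 1} with hA
  have hAopen : IsOpen A := by
    have h1 : IsOpen {u : Fin 2 → ℝ | 0 < u 0 ∧ 0 < u 1 ∧ u 0 + u 1 < 1} := by
      refine IsOpen.inter ?_ (IsOpen.inter ?_ ?_)
      · exact isOpen_lt continuous_const (continuous_apply 0)
      · exact isOpen_lt continuous_const (continuous_apply 1)
      · exact isOpen_lt ((continuous_apply 0).add (continuous_apply 1)) continuous_const
    exact h1.preimage hφcont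
  have hrepr : ∀ x : E2, x = p + φ x 0 • v₁ + φ x 1 • v₂ := by
    intro x
    have h := b.equivFun.symm_apply_apply (x - p)
    rw [b.equivFun_symm_apply, Fin.sum_univ_two, hb0, hb1] at h
    have h2 : x - p = φ x 0 • v₁ + φ x 1 • v₂ := h.symm
    have h3 := sub_eq_iff_eq_add.1 h2
    exact h3.trans (by abel)
  have hAsub : A ⊆ S := by
    intro x hx
    obtain ⟨h0, h1, hsum⟩ := hx
    obtain ⟨a, ha⟩ : ∃ a, a = φ x 0 := ⟨_, rfl⟩
    obtain ⟨c, hc⟩ : ∃ c, c = φ x 1 := ⟨_, rfl⟩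
    rw [← ha] at h0 hsum
    rw [← hc] at h1 hsum
    have hcombo : x = (1-a-c) • p + a • q + c • z := by
      have hx2 := hrepr x
      rw [← ha, ← hc] at hx2
      rw [hx2, hv₁, hv₂]
      module
    have hmem := hS.sum_mem (t := (Finset.univ : Finset (Fin 3)))
      (w := ![1-a-c, a, c]) (z := ![p, q, z]) ?_ ?_ ?_
    · rw [Fin.sum_univ_three] at hmem
      simp only [Matrix.cons_val_zero, Matrix.cons_val_one, Matrix.head_cons,
        Matrix.cons_val_two, Matrix.tail_cons] at hmem
      rwa [← hcombo] at hmem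
    · intro i _
      fin_cases i <;> simp <;> linarith
    · rw [Fin.sum_univ_three]
      simp only [Matrix.cons_val_zero, Matrix.cons_val_one, Matrix.head_cons,
        Matrix.cons_val_two, Matrix.tail_cons]
      ring
    · intro i _
      fin_cases i <;> simpa using (by first | exact hp | exact hq | exact hz)
  have hAne : A.Nonempty := by
    refine ⟨p + ((1/4 : ℝ) • v₁ + (1/4 : ℝ) • v₂), ?_⟩
    have hval : ∀ j, φ (p + ((1/4 : ℝ) • v₁ + (1/4 : ℝ) • v₂)) j
        = (1/4 : ℝ) * (if (0:Fin 2) = j then 1 else 0)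
          + (1/4 : ℝ) * (if (1:Fin 2) = j then 1 else 0) := by
      intro j
      rw [hφ]
      simp only [add_sub_cancel_left]
      rw [← hb0, ← hb1, map_add, map_smul, map_smul]
      simp only [Module.Basis.equivFun_self, Pi.add_apply, Pi.smul_apply, smul_eq_mul,
        Finsupp.single_apply]
    refine ⟨?_, ?_, ?_⟩
    · rw [hval]; norm_num
    · rw [hval]; norm_num
    · rw [hval, hval]; norm_num
  obtain ⟨x, hx⟩ := hAne
  have : x ∈ interior S := (hAopen.subset_interior_iff.2 hAsub) hx
  rw [hint] at this
  exact this

/-- Gordan-type alternative. -/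
lemma aux_gordan {n : ℕ} (J : Finset (Fin n)) (y : Fin n → E2)
    (h : ¬ ∃ v : E2, ∀ j ∈ J, 0 < ⟪y j, v⟫) :
    ∃ lam : Fin n → ℝ, (∀ j, 0 ≤ lam j) ∧ (∀ j, lam j ≠ 0 → j ∈ J) ∧ (∃ j ∈ J, lam j ≠ 0) ∧
      ∑ j ∈ J, lam j • y j = 0 := by
  classical
  set P : Finset E2 := J.image y with hP
  have hmem : (0:E2) ∈ convexHull ℝ (P : Set E2) := by
    by_contra h0
    have hconv : Convex ℝ (convexHull ℝ (P:Set E2)) := convex_convexHull _ _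
    have hcomp : IsCompact (convexHull ℝ (P:Set E2)) := P.finite_toSet.isCompact_convexHull ℝ
    obtain ⟨f, u, hfu, hu0⟩ := geometric_hahn_banach_closed_point hconv hcomp.isClosed h0
    have hu : u < 0 := by simpa using hu0
    apply h
    refine ⟨-((InnerProductSpace.toDual ℝ E2).symm f), ?_⟩
    intro j hj
    have h1 : f (y j) < u :=
      hfu _ (subset_convexHull _ _ (Finset.mem_image_of_mem y hj))
    have h2 : ⟪(InnerProductSpace.toDual ℝ E2).symm f, y j⟫ = f (y j) :=
      InnerProductSpace.toDual_symm_apply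
    have h3 : ⟪y j, (InnerProductSpace.toDual ℝ E2).symm f⟫ = f (y j) := by
      rw [real_inner_comm]; exact h2
    rw [inner_neg_right, h3]
    linarith
  rw [Finset.mem_convexHull'] at hmem
  obtain ⟨w, hw0, hw1, hws⟩ := hmem
  have hrep : ∀ pt ∈ P, ∃ j, j ∈ J ∧ y j = pt := by
    intro pt hpt
    rw [hP, Finset.mem_image] at hpt
    obtain ⟨j, hj, hyj⟩ := hpt
    exact ⟨j, hj, hyj⟩
  choose r hrJ hry using hrep
  set lam : Fin n → ℝ := fun j => ∑ pt ∈ P.attach, if r pt.1 pt.2 = j then w pt.1 else 0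
    with hlam
  have hlam0 : ∀ j, 0 ≤ lam j := by
    intro j
    apply Finset.sum_nonneg
    intro pt _
    split
    · exact hw0 _ pt.2
    · exact le_refl 0
  have hlamJ : ∀ j, lam j ≠ 0 → j ∈ J := by
    intro j hj
    rw [hlam] at hj
    obtain ⟨pt, _, hpt⟩ := Finset.exists_ne_zero_of_sum_ne_zero hj
    by_cases hr : r pt.1 pt.2 = j
    · exact hr ▸ hrJ pt.1 pt.2
    · simp [hr] at hpt
  have hswap : ∀ F : Fin n → E2, (∀ j pt, w pt • F j = w pt • F j) →
      ∑ j ∈ J, lam j • F j = ∑ pt ∈ P.attach, w pt.1 • F (r pt.1 pt.2) := by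
    intro F _
    rw [hlam]
    simp only [Finset.sum_smul]
    rw [Finset.sum_comm]
    apply Finset.sum_congr rfl
    intro pt _
    rw [show (∑ j ∈ J, (if r pt.1 pt.2 = j then w pt.1 else 0) • F j)
        = ∑ j ∈ J, (if r pt.1 pt.2 = j then w pt.1 • F j else 0) by
      apply Finset.sum_congr rfl; intro j _; split <;> simp]
    rw [Finset.sum_ite_eq J (r pt.1 pt.2) (fun j => w pt.1 • F j)]
    simp [hrJ pt.1 pt.2]
  have hsum : ∑ j ∈ J, lam j • y j = 0 := by
    rw [hswap y (fun _ _ => rfl)]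
    have : ∀ pt ∈ P.attach, w pt.1 • y (r pt.1 pt.2) = w pt.1 • pt.1 := by
      intro pt _
      rw [hry pt.1 pt.2]
    rw [Finset.sum_congr rfl this]
    rw [Finset.sum_attach P (fun pt => w pt • pt)]
    exact hws
  have hlam1 : ∑ j ∈ J, lam j = 1 := by
    rw [hlam]
    rw [Finset.sum_comm]
    have : ∀ pt ∈ P.attach, (∑ j ∈ J, if r pt.1 pt.2 = j then w pt.1 else 0) = w pt.1 := by
      intro pt _
      rw [Finset.sum_ite_eq J (r pt.1 pt.2) (fun _ => w pt.1)]
      simp [hrJ pt.1 pt.2]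
    rw [Finset.sum_congr rfl this]
    rw [Finset.sum_attach P (fun pt => w pt)]
    exact hw1
  have hex : ∃ j ∈ J, lam j ≠ 0 := by
    by_contra hall
    push_neg at hall
    rw [Finset.sum_congr rfl (fun j hj => hall j hj)] at hlam1
    simp at hlam1
  exact ⟨lam, hlam0, hlamJ, hex, hsum⟩

lemma aux_ray {Uj : Set E2} (hU : IsOpen Uj) (hcvx : Convex ℝ Uj) {p₀ wd : E2} {ta : ℝ}
    (hxaU : p₀ + ta • wd ∈ Uj) (hta : 0 < ta) (hp₀ : p₀ ∉ Uj)
    {t : ℝ} (hx : p₀ + t • wd ∈ closure Uj) : 0 ≤ t := by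
  set I : Set ℝ := {τ : ℝ | p₀ + τ • wd ∈ Uj} with hI
  have hIconv : Convex ℝ I := by
    have heq : I = (AffineMap.lineMap p₀ (p₀ + wd) : ℝ →ᵃ[ℝ] E2) ⁻¹' Uj := by
      ext τ
      have : (AffineMap.lineMap p₀ (p₀ + wd) : ℝ →ᵃ[ℝ] E2) τ = p₀ + τ • wd := by
        rw [AffineMap.lineMap_apply]
        simp only [vsub_eq_sub, add_sub_cancel_left, vadd_eq_add]
        abel
      simp only [hI, mem_setOf_eq, Set.mem_preimage, this]
    rw [heq]
    exact hcvx.affine_preimage _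
  have h0I : (0:ℝ) ∉ I := by
    intro h
    apply hp₀
    have h' : p₀ + (0:ℝ) • wd ∈ Uj := h
    simpa using h'
  have htaI : ta ∈ I := hxaU
  have hpos : ∀ τ ∈ I, 0 < τ := by
    rcases aux_real_convex_side hIconv h0I with h | h
    · exact h
    · exact absurd (h ta htaI) (not_lt.2 (le_of_lt hta))
  apply aux_real_combo (A := ta)
  intro θ h0 h1
  have hmem : (1-θ) • (p₀ + ta • wd) + θ • (p₀ + t • wd) ∈ Uj := by
    have := hcvx.combo_interior_closure_mem_interior (a := 1-θ) (b := θ)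
      (by rwa [hU.interior_eq]) hx (by linarith) (le_of_lt h0) (by ring)
    rwa [hU.interior_eq] at this
  have hparam : (1-θ) • (p₀ + ta • wd) + θ • (p₀ + t • wd) = p₀ + ((1-θ)*ta + θ*t) • wd := by
    module
  rw [hparam] at hmem
  exact hpos _ hmem

set_option maxHeartbeats 4000000

/-- Reduction from open to closed realizations.  Let `U` be a tuple of bounded open
convex sets in the plane, `X i := closure (U i)`, and `X'` a tuple of compact convex
sets with `X' i ⊆ X i` and `code X' = code X` such that moreover:
(1) for every codeword `c ∈ code U` there is a triangle contained in `⋂ i ∈ c, U i`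
whose three vertices lie in `X' i` for all `i ∈ c` and whose interior contains a point
`p` with `pattern U p = c`; and
(2) for every line `L` containing a nonempty set `⋂ i ∈ σ, X i` of empty interior
(`σ` nonempty) and every `i` with `L ∩ U i ≠ ∅`, the set `X' i` contains the four
vertices of a quadrilateral contained in `X i` having `L ∩ X i` as one of its diagonals
(the vertices being in cyclic order so that the two diagonals cross).
Then `U' i := interior (X' i)` satisfies `code U' = code U`. -/
theorem open_closed_reduction {n : ℕ}
    (U : Fin n → Set (EuclideanSpace ℝ (Fin 2)))
    (hUopen : ∀ i, IsOpen (U i)) (hUbdd : ∀ i, Bornology.IsBounded (U i))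
    (hUcvx : ∀ i, Convex ℝ (U i))
    (X : Fin n → Set (EuclideanSpace ℝ (Fin 2))) (hX : ∀ i, X i = closure (U i))
    (X' : Fin n → Set (EuclideanSpace ℝ (Fin 2)))
    (hX'cpt : ∀ i, IsCompact (X' i)) (hX'cvx : ∀ i, Convex ℝ (X' i))
    (hX'sub : ∀ i, X' i ⊆ X i) (hX'code : code X' = code X)
    (htriangle : ∀ c ∈ code U,
      ∃ t₁ t₂ t₃ p : EuclideanSpace ℝ (Fin 2),
        convexHull ℝ {t₁, t₂, t₃} ⊆ ⋂ i ∈ c, U i ∧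
        p ∈ interior (convexHull ℝ {t₁, t₂, t₃}) ∧
        pattern U p = c ∧
        ∀ i ∈ c, ({t₁, t₂, t₃} : Set (EuclideanSpace ℝ (Fin 2))) ⊆ X' i)
    (hquad : ∀ L : Set (EuclideanSpace ℝ (Fin 2)), IsLine L →
      (∃ σ : Set (Fin n), σ.Nonempty ∧ (⋂ i ∈ σ, X i).Nonempty ∧
        interior (⋂ i ∈ σ, X i) = ∅ ∧ (⋂ i ∈ σ, X i) ⊆ L) →
      ∀ i, (L ∩ U i).Nonempty →
        ∃ a b c d : EuclideanSpace ℝ (Fin 2),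
          ({a, b, c, d} : Set (EuclideanSpace ℝ (Fin 2))) ⊆ X' i ∧
          convexHull ℝ {a, b, c, d} ⊆ X i ∧
          segment ℝ a b = L ∩ X i ∧
          (openSegment ℝ a b ∩ openSegment ℝ c d).Nonempty) :
    code (fun i => interior (X' i)) = code U := by

  classical
  have hXclosed : ∀ i, IsClosed (X i) := fun i => (hX i) ▸ isClosed_closure
  have hXX : ∀ i, U i ⊆ X i := fun i => (hX i) ▸ subset_closure
  have hintX : ∀ i, interior (X i) = U i := fun i => by
    rw [hX i]; exact aux_interior_closure (hUopen i) (hUcvx i)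
  have hVU : ∀ i, interior (X' i) ⊆ U i := fun i => by
    rw [← hintX i]; exact interior_mono (hX'sub i)
  have hXcvx : ∀ i, Convex ℝ (X i) := fun i => (hX i) ▸ (hUcvx i).closure
  -- triangle lemma: witnesses deep inside all relevant X' i
  have hT : ∀ z : EuclideanSpace ℝ (Fin 2), ∃ w : EuclideanSpace ℝ (Fin 2),
      ∀ i, z ∈ U i → w ∈ interior (X' i) := by
    intro z
    obtain ⟨t₁, t₂, t₃, pw, hhull, hpint, hpat, hvert⟩ := htriangle _ ⟨z, rfl⟩
    refine ⟨pw, fun i hi => ?_⟩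
    have hi' : i ∈ pattern U z := hi
    have h1 : convexHull ℝ {t₁, t₂, t₃} ⊆ X' i :=
      convexHull_min (hvert i hi') (hX'cvx i)
    exact interior_mono h1 hpint
  apply Set.eq_of_subset_of_subset
  · -- hard direction : code U' ⊆ code U
    rintro c ⟨p₀, hp₀⟩
    by_contra hnc
    have hpV : ∀ i, i ∈ c ↔ p₀ ∈ interior (X' i) := fun i => by rw [← hp₀]; exact Iff.rfl
    -- no realization of c in the closed code either
    have htrans : ∀ q : EuclideanSpace ℝ (Fin 2), pattern X q ≠ c := by
      intro q hq
      have hqX : ∀ j, j ∈ c ↔ q ∈ X j := fun j => by rw [← hq]; exact Iff.rfl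
      have hWopen : IsOpen (⋂ j ∈ {j | j ∉ c}, (X j)ᶜ) :=
        (Set.toFinite _).isOpen_biInter (fun j _ => (hXclosed j).isOpen_compl)
      have hqW : q ∈ ⋂ j ∈ {j | j ∉ c}, (X j)ᶜ := by
        rw [mem_iInter₂]
        intro j hj
        exact fun hqj => hj ((hqX j).2 hqj)
      obtain ⟨ε, hε, hball⟩ := Metric.isOpen_iff.1 hWopen q hqW
      set θ : ℝ := min (1/2) (ε / (2 * (‖p₀ - q‖ + 1))) with hθ
      have hθ1 : 0 < ε / (2 * (‖p₀ - q‖ + 1)) := by positivity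
      have hθpos : 0 < θ := lt_min (by norm_num) hθ1
      have hθhalf : θ ≤ 1/2 := min_le_left _ _
      set yy := θ • p₀ + (1 - θ) • q with hyy
      have hyyU : ∀ i ∈ c, yy ∈ U i := by
        intro i hi
        have h1 : p₀ ∈ interior (U i) := by
          rw [(hUopen i).interior_eq]
          exact hVU i ((hpV i).1 hi)
        have h2 : q ∈ closure (U i) := by rw [← hX i]; exact (hqX i).1 hi
        have h3 := (hUcvx i).combo_interior_closure_mem_interior (a := θ) (b := 1-θ)
          h1 h2 hθpos (by linarith) (by ring)
        rw [(hUopen i).interior_eq] at h3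
        exact h3
      have hyyW : yy ∈ ⋂ j ∈ {j | j ∉ c}, (X j)ᶜ := by
        apply hball
        rw [Metric.mem_ball, dist_eq_norm]
        have h4 : yy - q = θ • (p₀ - q) := by rw [hyy]; module
        rw [h4, norm_smul, Real.norm_eq_abs, abs_of_pos hθpos]
        have h5 : θ ≤ ε / (2 * (‖p₀ - q‖ + 1)) := min_le_right _ _
        have h6 : ‖p₀ - q‖ < ‖p₀ - q‖ + 1 := by linarith
        calc θ * ‖p₀ - q‖ ≤ (ε / (2 * (‖p₀ - q‖ + 1))) * ‖p₀ - q‖ := by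
              apply mul_le_mul_of_nonneg_right h5 (norm_nonneg _)
          _ < ε := by
              rw [div_mul_eq_mul_div, div_lt_iff₀ (by positivity)]
              nlinarith [norm_nonneg (p₀ - q)]
      apply hnc
      refine ⟨yy, ?_⟩
      ext j
      simp only [pattern, mem_setOf_eq]
      constructor
      · intro hj
        by_contra hjc
        exact (mem_iInter₂.1 hyyW j hjc) (hXX j hj)
      · intro hj
        exact hyyU j hj
    -- covering of the c-region by the other X' j
    have hcov : ∀ z : EuclideanSpace ℝ (Fin 2),
        (∀ i ∈ c, z ∈ interior (X' i)) → ∃ j, j ∉ c ∧ z ∈ X' j := by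
      intro z hz
      by_contra hno
      push_neg at hno
      have hzc : pattern X' z = c := by
        ext j
        simp only [pattern, mem_setOf_eq]
        constructor
        · intro hj
          by_contra hjc
          exact (hno j hjc) hj
        · intro hj
          exact interior_subset (hz j hj)
      have hcX : c ∈ code X := hX'code ▸ ⟨z, hzc⟩
      obtain ⟨q, hq⟩ := hcX
      exact htrans q hq
    -- a set whose open part contains p₀ illegally
    obtain ⟨l, hlc, hlU⟩ : ∃ l, l ∉ c ∧ p₀ ∈ U l := by
      by_contra hno
      push_neg at hno
      apply hnc
      refine ⟨p₀, ?_⟩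
      ext j
      simp only [pattern, mem_setOf_eq]
      constructor
      · intro hj
        by_contra hjc
        exact (hno j hjc) hj
      · intro hj
        exact hVU j ((hpV j).1 hj)
    obtain ⟨wl0, hwl0⟩ := hT p₀
    have hwl : wl0 ∈ interior (X' l) := hwl0 l hlU
    have hwlp : wl0 ≠ p₀ := by
      intro h
      exact hlc ((hpV l).2 (h ▸ hwl))
    -- the active index set at p₀
    set J₀ : Finset (Fin n) := Finset.univ.filter (fun j => j ∉ c ∧ p₀ ∈ X' j) with hJ₀
    have hJmem : ∀ j, j ∈ J₀ ↔ (j ∉ c ∧ p₀ ∈ X' j) := by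
      intro j; rw [hJ₀, Finset.mem_filter]; simp
    have hVne : ∀ j, p₀ ∈ X' j → (interior (X' j)).Nonempty := by
      intro j hj
      have h1 : (U j).Nonempty := by
        rcases (U j).eq_empty_or_nonempty with h | h
        · exfalso
          have h2 : p₀ ∈ closure (U j) := (hX j) ▸ (hX'sub j hj)
          rw [h] at h2
          simpa using h2
        · exact h
      obtain ⟨z, hz⟩ := h1
      obtain ⟨w, hw⟩ := hT z
      exact ⟨w, hw j hz⟩
    have hsupp : ∀ j ∈ J₀, ∃ yv : EuclideanSpace ℝ (Fin 2), yv ≠ 0 ∧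
        (∀ x ∈ X' j, ⟪yv, x⟫ ≤ ⟪yv, p₀⟫) ∧
        (∀ x ∈ interior (X' j), ⟪yv, x⟫ < ⟪yv, p₀⟫) := by
      intro j hj
      obtain ⟨hjc, hjX⟩ := (hJmem j).1 hj
      exact aux_support (hX'cvx j) (hVne j hjX) (fun h => hjc ((hpV j).2 h))
    choose! y hy0 hy1 hy2 using hsupp
    -- escape is impossible
    have hesc : ∀ yv : Fin n → EuclideanSpace ℝ (Fin 2),
        (∀ j ∈ J₀, ∀ x ∈ X' j, ⟪yv j, x⟫ ≤ ⟪yv j, p₀⟫) →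
        ¬ ∃ v : EuclideanSpace ℝ (Fin 2), ∀ j ∈ J₀, 0 < ⟪yv j, v⟫ := by
      rintro yv hyv ⟨v, hv⟩
      have hOopen : IsOpen (⋂ i ∈ c, interior (X' i)) :=
        (Set.toFinite _).isOpen_biInter (fun i _ => isOpen_interior)
      have hpO : p₀ ∈ ⋂ i ∈ c, interior (X' i) :=
        mem_iInter₂.2 (fun i hi => (hpV i).1 hi)
      have hW'open : IsOpen (⋂ j ∈ {j | p₀ ∉ X' j}, (X' j)ᶜ) :=
        (Set.toFinite _).isOpen_biInter (fun j _ => ((hX'cpt j).isClosed).isOpen_compl)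
      have hpW' : p₀ ∈ ⋂ j ∈ {j | p₀ ∉ X' j}, (X' j)ᶜ :=
        mem_iInter₂.2 (fun j hj => hj)
      obtain ⟨ε, hε, hball⟩ := Metric.isOpen_iff.1 (hOopen.inter hW'open) p₀ ⟨hpO, hpW'⟩
      set δ : ℝ := ε / (2 * (‖v‖ + 1)) with hδ
      have hδpos : 0 < δ := by positivity
      have hzball : p₀ + δ • v ∈ Metric.ball p₀ ε := by
        rw [Metric.mem_ball, dist_eq_norm, add_sub_cancel_left, norm_smul,
          Real.norm_eq_abs, abs_of_pos hδpos, hδ]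
        rw [div_mul_eq_mul_div, div_lt_iff₀ (by positivity)]
        nlinarith [norm_nonneg v]
      obtain ⟨hzO, hzW'⟩ := hball hzball
      obtain ⟨j, hjc, hjX⟩ := hcov _ (fun i hi => mem_iInter₂.1 hzO i hi)
      by_cases hj0 : p₀ ∈ X' j
      · have hjJ : j ∈ J₀ := (hJmem j).2 ⟨hjc, hj0⟩
        have h1 := hyv j hjJ _ hjX
        have h2 : ⟪yv j, p₀ + δ • v⟫ = ⟪yv j, p₀⟫ + δ * ⟪yv j, v⟫ := by
          rw [inner_add_right, real_inner_smul_right]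
        have h3 := hv j hjJ
        nlinarith
      · exact (mem_iInter₂.1 hzW' j hj0) hjX
    -- thin intersections for supported families
    have hthin : ∀ (lamx : Fin n → ℝ) (yx : Fin n → EuclideanSpace ℝ (Fin 2)),
        (∀ j, 0 ≤ lamx j) → (∀ j, lamx j ≠ 0 → j ∈ J₀) →
        (∀ j ∈ J₀, ∀ x ∈ X' j, ⟪yx j, x⟫ ≤ ⟪yx j, p₀⟫) →
        (∑ j ∈ J₀, lamx j • yx j = 0) →
        ∀ x : EuclideanSpace ℝ (Fin 2), (∀ j, lamx j ≠ 0 → x ∈ X' j) →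
        ∀ j, lamx j ≠ 0 → ⟪yx j, x⟫ = ⟪yx j, p₀⟫ := by
      intro lamx yx h0 hJ hle hsum x hx
      have hterm : ∀ j ∈ J₀, lamx j * (⟪yx j, x⟫ - ⟪yx j, p₀⟫) ≤ 0 := by
        intro j hj
        rcases eq_or_ne (lamx j) 0 with h | h
        · rw [h]; simp
        · have h1 := hle j hj x (hx j h)
          have h2 := h0 j
          nlinarith
      have hsum0 : ∑ j ∈ J₀, lamx j * (⟪yx j, x⟫ - ⟪yx j, p₀⟫) = 0 := by
        have h1 : ∀ j ∈ J₀, lamx j * (⟪yx j, x⟫ - ⟪yx j, p₀⟫) = ⟪lamx j • yx j, x - p₀⟫ := by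
          intro j _
          rw [real_inner_smul_left, inner_sub_right]
        rw [Finset.sum_congr rfl h1, ← sum_inner, hsum, inner_zero_left]
      have hall := (Finset.sum_eq_zero_iff_of_nonpos hterm).1 hsum0
      intro j hj
      have := hall j (hJ j hj)
      have h2 : ⟪yx j, x⟫ - ⟪yx j, p₀⟫ = 0 := by
        rcases mul_eq_zero.1 this with h | h
        · exact absurd h hj
        · exact h
      linarith
    -- no common U-point for supported families
    have hUemp : ∀ (lamx : Fin n → ℝ) (yx : Fin n → EuclideanSpace ℝ (Fin 2)),
        (∀ j, 0 ≤ lamx j) → (∀ j, lamx j ≠ 0 → j ∈ J₀) →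
        (∀ j ∈ J₀, ∀ x ∈ X' j, ⟪yx j, x⟫ ≤ ⟪yx j, p₀⟫) →
        (∀ j ∈ J₀, ∀ x ∈ interior (X' j), ⟪yx j, x⟫ < ⟪yx j, p₀⟫) →
        (∃ j, lamx j ≠ 0) →
        (∑ j ∈ J₀, lamx j • yx j = 0) →
        ∀ z : EuclideanSpace ℝ (Fin 2), ¬ (∀ j, lamx j ≠ 0 → z ∈ U j) := by
      intro lamx yx h0 hJ hle hlt hex hsum z hz
      obtain ⟨w, hw⟩ := hT z
      obtain ⟨j₀, hj₀⟩ := hex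
      have h1 := hthin lamx yx h0 hJ hle hsum w
        (fun j hj => interior_subset (hw j (hz j hj))) j₀ hj₀
      have h2 := hlt j₀ (hJ j₀ hj₀) w (hw j₀ (hz j₀ hj₀))
      linarith
    -- interior of the X-intersection is empty
    have hIcap : ∀ (lamx : Fin n → ℝ),
        (∀ z : EuclideanSpace ℝ (Fin 2), ¬ (∀ j, lamx j ≠ 0 → z ∈ U j)) →
        interior (⋂ j ∈ {j | lamx j ≠ 0}, X j) = ∅ := by
      intro lamx hU2
      rw [eq_empty_iff_forall_notMem]
      intro z hzint
      apply hU2 z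
      intro j hj
      have h1 : (⋂ j ∈ {j | lamx j ≠ 0}, X j) ⊆ X j := biInter_subset_of_mem hj
      have h2 := interior_mono h1 hzint
      rwa [hintX j] at h2
    have hp₀cap : ∀ (lamx : Fin n → ℝ), (∀ j, lamx j ≠ 0 → j ∈ J₀) →
        p₀ ∈ ⋂ j ∈ {j | lamx j ≠ 0}, X j := by
      intro lamx hJ
      exact mem_iInter₂.2 (fun j hj => hX'sub j ((hJmem j).1 (hJ j hj)).2)
    -- premise builder for hquad
    have hbuild : ∀ (lamx : Fin n → ℝ), (∀ j, lamx j ≠ 0 → j ∈ J₀) → (∃ j, lamx j ≠ 0) →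
        interior (⋂ j ∈ {j | lamx j ≠ 0}, X j) = ∅ →
        ∀ wdir : EuclideanSpace ℝ (Fin 2),
        (∀ z ∈ (⋂ j ∈ {j | lamx j ≠ 0}, X j), ∃ t : ℝ, z = p₀ + t • wdir) →
        ∃ σ : Set (Fin n), σ.Nonempty ∧ (⋂ i ∈ σ, X i).Nonempty ∧
          interior (⋂ i ∈ σ, X i) = ∅ ∧
          (⋂ i ∈ σ, X i) ⊆ {x | ∃ t : ℝ, x = p₀ + t • wdir} := by
      intro lamx hJ hex hint wdir hline
      exact ⟨{j | lamx j ≠ 0}, hex, ⟨p₀, hp₀cap lamx hJ⟩, hint, fun z hz => hline z hz⟩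
    -- the kill lemma
    have hkill : ∀ (wdir : EuclideanSpace ℝ (Fin 2)), wdir ≠ 0 →
        (∃ σ : Set (Fin n), σ.Nonempty ∧ (⋂ i ∈ σ, X i).Nonempty ∧
          interior (⋂ i ∈ σ, X i) = ∅ ∧
          (⋂ i ∈ σ, X i) ⊆ {x | ∃ t : ℝ, x = p₀ + t • wdir}) →
        ∀ j, j ∉ c → p₀ ∈ U j →
        (∃ xj, xj ∈ interior (X' j) ∧ ∃ t : ℝ, xj = p₀ + t • wdir) → False := by
      rintro wdir hw hpremise j hjc hjU ⟨xj, hxj, t, hxjt⟩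
      have hisline : IsLine {x : EuclideanSpace ℝ (Fin 2) | ∃ t : ℝ, x = p₀ + t • wdir} :=
        ⟨p₀, wdir, hw, rfl⟩
      obtain ⟨a, b, cc, d, hsub4, hhull4, hseg4, hcross4⟩ :=
        hquad _ hisline hpremise j ⟨p₀, ⟨0, by simp⟩, hjU⟩
      have hMXsub : {x : EuclideanSpace ℝ (Fin 2) | ∃ t : ℝ, x = p₀ + t • wdir} ∩ X j ⊆ X' j := by
        rw [← hseg4]
        exact (hX'cvx j).segment_subset (hsub4 (by simp)) (hsub4 (by simp))
      have hxjp : xj ≠ p₀ := by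
        intro h
        exact hjc ((hpV j).2 (h ▸ hxj))
      obtain ⟨ε, hε, hball⟩ := Metric.isOpen_iff.1 (hUopen j) p₀ hjU
      set ee : ℝ := ε / (2 * (‖p₀ - xj‖ + 1)) with hee
      have heepos : 0 < ee := by positivity
      have hx₂U : p₀ + ee • (p₀ - xj) ∈ U j := by
        apply hball
        rw [Metric.mem_ball, dist_eq_norm, add_sub_cancel_left, norm_smul,
          Real.norm_eq_abs, abs_of_pos heepos, hee]
        rw [div_mul_eq_mul_div, div_lt_iff₀ (by positivity)]
        nlinarith [norm_nonneg (p₀ - xj)]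
      have hx₂M : ∃ t' : ℝ, p₀ + ee • (p₀ - xj) = p₀ + t' • wdir := by
        refine ⟨ee * (-t), ?_⟩
        rw [hxjt]
        module
      have hx₂X' : p₀ + ee • (p₀ - xj) ∈ X' j := hMXsub ⟨hx₂M, hXX j hx₂U⟩
      have hpseg : p₀ ∈ openSegment ℝ xj (p₀ + ee • (p₀ - xj)) :=
        aux_mem_openSegment_shift xj p₀ heepos
      have hpint : p₀ ∈ interior (X' j) :=
        (hX'cvx j).openSegment_interior_self_subset_interior hxj hx₂X' hpseg
      exact hjc ((hpV j).2 hpint)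
    -- run phase 1
    have hne1 := hesc y (fun j hj x hx => hy1 j hj x hx)
    obtain ⟨lam, hlam0, hlamJ, ⟨jst, hjstJ, hjst⟩, hlamsum⟩ := aux_gordan J₀ y hne1
    have hUemp1 : ∀ z : EuclideanSpace ℝ (Fin 2), ¬ (∀ j, lam j ≠ 0 → z ∈ U j) :=
      hUemp lam y hlam0 hlamJ (fun j hj x hx => hy1 j hj x hx)
        (fun j hj x hx => hy2 j hj x hx) ⟨jst, hjst⟩ hlamsum
    have hint1 : interior (⋂ j ∈ {j | lam j ≠ 0}, X j) = ∅ := hIcap lam hUemp1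
    by_cases hdeg : ∀ z ∈ (⋂ j ∈ {j | lam j ≠ 0}, X j), z = p₀
    · exact hkill (wl0 - p₀) (sub_ne_zero.2 hwlp)
        (hbuild lam hlamJ ⟨jst, hjst⟩ hint1 (wl0 - p₀)
          (fun z hz => ⟨0, by rw [hdeg z hz]; simp⟩))
        l hlc hlU ⟨wl0, hwl, 1, by module⟩
    · push_neg at hdeg
      obtain ⟨s, hsY, hsp⟩ := hdeg
      have hY₁conv : Convex ℝ (⋂ j ∈ {j | lam j ≠ 0}, X j) :=
        convex_iInter (fun j => convex_iInter (fun _ => hXcvx j))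
      have hline1 : ∀ z ∈ (⋂ j ∈ {j | lam j ≠ 0}, X j), ∃ t : ℝ, z = p₀ + t • (s - p₀) :=
        aux_thin_line hY₁conv hint1 (hp₀cap lam hlamJ) hsY (fun h => hsp h.symm)
      set wd : EuclideanSpace ℝ (Fin 2) := s - p₀ with hwd
      have hwd0 : wd ≠ 0 := sub_ne_zero.2 hsp
      have hprem2 := hbuild lam hlamJ ⟨jst, hjst⟩ hint1 wd hline1
      -- the line M and its normal
      obtain ⟨g0, hg00, hg0w, hg0dec⟩ := aux_line_normal hwd0
      have hVlM : ∀ x, x ∈ interior (X' l) → ¬ ∃ t : ℝ, x = p₀ + t • wd := by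
        intro x hx hxM
        exact hkill wd hwd0 hprem2 l hlc hlU ⟨x, hx, hxM⟩
      obtain ⟨g, hg0, hgw, hgdec, hVl⟩ :
          ∃ g : EuclideanSpace ℝ (Fin 2), g ≠ 0 ∧ ⟪g, wd⟫ = 0 ∧
            (∀ v : EuclideanSpace ℝ (Fin 2), ⟪g, v⟫ = 0 → ∃ t : ℝ, v = t • wd) ∧
            (∀ x ∈ interior (X' l), ⟪g, p₀⟫ < ⟪g, x⟫) := by
        have hdisj : ∀ x ∈ interior (X' l), ⟪g0, x⟫ ≠ ⟪g0, p₀⟫ := by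
          intro x hx heq
          apply hVlM x hx
          have h1 : ⟪g0, x - p₀⟫ = 0 := by rw [inner_sub_right, heq]; ring
          obtain ⟨t, ht⟩ := hg0dec _ h1
          exact ⟨t, by rw [← ht]; abel⟩
        rcases aux_convex_side (hX'cvx l).interior hdisj with h | h
        · exact ⟨g0, hg00, hg0w, hg0dec, fun x hx => h x hx⟩
        · refine ⟨-g0, neg_ne_zero.2 hg00, by rw [inner_neg_left, hg0w]; ring, ?_, ?_⟩
          · intro v hv
            rw [inner_neg_left, neg_eq_zero] at hv
            exact hg0dec v hv
          · intro x hx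
            have := h x hx
            rw [inner_neg_left, inner_neg_left]
            linarith
      -- one-sided bound extends from the interior to the whole set
      have hSideBound : ∀ j, ∀ x₀ ∈ interior (X' j),
          (∀ x ∈ interior (X' j), ⟪g, p₀⟫ < ⟪g, x⟫) →
          ∀ x ∈ X' j, ⟪g, p₀⟫ ≤ ⟪g, x⟫ := by
        intro j x₀ hx₀ hside x hx
        apply aux_real_combo (A := ⟪g, x₀⟫)
        intro θ h0 h1
        have hmem : (1-θ) • x₀ + θ • x ∈ interior (X' j) :=
          (hX'cvx j).combo_interior_closure_mem_interior (a := 1-θ) (b := θ)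
            hx₀ (subset_closure hx) (by linarith) (le_of_lt h0) (by ring)
        have h2 := hside _ hmem
        rw [inner_add_right, real_inner_smul_right, real_inner_smul_right] at h2
        linarith
      have hX'lbound : ∀ x ∈ X' l, ⟪g, p₀⟫ ≤ ⟪g, x⟫ := hSideBound l wl0 hwl hVl
      -- phase 2 vectors
      set y2 : Fin n → EuclideanSpace ℝ (Fin 2) := fun j =>
        if (∃ x, x ∈ interior (X' j) ∧ ∃ t : ℝ, x = p₀ + t • wd) then y j else -g with hy2def
      have honM : ∀ x : EuclideanSpace ℝ (Fin 2), ⟪g, x⟫ = ⟪g, p₀⟫ →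
          ∃ t : ℝ, x = p₀ + t • wd := by
        intro x heq
        have h1 : ⟪g, x - p₀⟫ = 0 := by rw [inner_sub_right, heq]; ring
        obtain ⟨t, ht⟩ := hgdec _ h1
        exact ⟨t, by rw [← ht]; abel⟩
      have hy2pack : ∀ j ∈ J₀, (∀ x ∈ X' j, ⟪y2 j, x⟫ ≤ ⟪y2 j, p₀⟫) ∧
          (∀ x ∈ interior (X' j), ⟪y2 j, x⟫ < ⟪y2 j, p₀⟫) := by
        intro j hj
        by_cases hcr : (∃ x, x ∈ interior (X' j) ∧ ∃ t : ℝ, x = p₀ + t • wd)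
        · have hval : y2 j = y j := by rw [hy2def]; exact if_pos hcr
          rw [hval]
          exact ⟨fun x hx => hy1 j hj x hx, fun x hx => hy2 j hj x hx⟩
        · have hval : y2 j = -g := by rw [hy2def]; exact if_neg hcr
          obtain ⟨hjc, hjX⟩ := (hJmem j).1 hj
          obtain ⟨z, hzUj, hzUl⟩ : ∃ z, z ∈ U j ∧ z ∈ U l := by
            have h1 : p₀ ∈ closure (U j) := (hX j) ▸ hX'sub j hjX
            rw [mem_closure_iff] at h1
            obtain ⟨z, hz1, hz2⟩ := h1 (U l) (hUopen l) hlU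
            exact ⟨z, hz2, hz1⟩
          obtain ⟨w2, hw2⟩ := hT z
          have hw2j : w2 ∈ interior (X' j) := hw2 j hzUj
          have hw2l : w2 ∈ interior (X' l) := hw2 l hzUl
          have hdisj : ∀ x' ∈ interior (X' j), ⟪g, x'⟫ ≠ ⟪g, p₀⟫ := by
            intro x' hx' heq
            exact hcr ⟨x', hx', honM x' heq⟩
          have hside : ∀ x' ∈ interior (X' j), ⟪g, p₀⟫ < ⟪g, x'⟫ := by
            rcases aux_convex_side (hX'cvx j).interior hdisj with h | h
            · exact h
            · exact absurd (hVl w2 hw2l) (not_lt.2 (le_of_lt (h w2 hw2j)))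
          constructor
          · intro x hx
            rw [hval, inner_neg_left, inner_neg_left]
            have := hSideBound j w2 hw2j hside x hx
            linarith
          · intro x hx
            rw [hval, inner_neg_left, inner_neg_left]
            have := hside x hx
            linarith
      -- phase 2 Gordan
      have hne2 := hesc y2 (fun j hj => (hy2pack j hj).1)
      obtain ⟨lam2, hlam20, hlam2J, ⟨j2, hj2J, hj2⟩, hlam2sum⟩ := aux_gordan J₀ y2 hne2
      have hT0 : ∑ j ∈ J₀, lam2 j * ⟪y2 j, wd⟫ = 0 := by
        have h1 : ∀ j ∈ J₀, lam2 j * ⟪y2 j, wd⟫ = ⟪lam2 j • y2 j, wd⟫ :=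
          fun j _ => (real_inner_smul_left _ _ _).symm
        rw [Finset.sum_congr rfl h1, ← sum_inner, hlam2sum, inner_zero_left]
      -- there is a cross index in the support
      have hcrossex : ∃ j ∈ J₀, lam2 j ≠ 0 ∧
          (∃ x, x ∈ interior (X' j) ∧ ∃ t : ℝ, x = p₀ + t • wd) := by
        by_contra hall
        have h1 : ∀ j ∈ J₀, lam2 j • y2 j = lam2 j • (-g) := by
          intro j hj
          rcases eq_or_ne (lam2 j) 0 with h | h
          · rw [h, zero_smul, zero_smul]
          · have h2 : ¬ (∃ x, x ∈ interior (X' j) ∧ ∃ t : ℝ, x = p₀ + t • wd) :=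
              fun hc => hall ⟨j, hj, h, hc⟩
            rw [show y2 j = -g from by rw [hy2def]; exact if_neg h2]
        rw [Finset.sum_congr rfl h1, ← Finset.sum_smul] at hlam2sum
        have h2 : (0:ℝ) < ∑ j ∈ J₀, lam2 j :=
          Finset.sum_pos' (fun j _ => hlam20 j)
            ⟨j2, hj2J, lt_of_le_of_ne (hlam20 j2) (Ne.symm hj2)⟩
        rcases smul_eq_zero.1 hlam2sum with h | h
        · exact (ne_of_gt h2) h
        · exact hg0 (neg_eq_zero.1 h)
      obtain ⟨jc0, hjc0J, hjc0lam, hjc0cross⟩ := hcrossex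
      have hy2jc0 : y2 jc0 = y jc0 := by rw [hy2def]; exact if_pos hjc0cross
      obtain ⟨xc0, hxc0, tc0, htc0⟩ := hjc0cross
      have hsign : ∀ j ∈ J₀, ∀ x ∈ interior (X' j), ∀ t : ℝ, x = p₀ + t • wd →
          t * ⟪y j, wd⟫ < 0 := by
        intro j hj x hx t ht
        have h1 := hy2 j hj x hx
        rw [ht, inner_add_right, real_inner_smul_right] at h1
        linarith
      have hterm0 : lam2 jc0 * ⟪y2 jc0, wd⟫ ≠ 0 := by
        rw [hy2jc0]
        apply mul_ne_zero hjc0lam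
        intro h
        have := hsign jc0 hjc0J xc0 hxc0 tc0 htc0
        rw [h, mul_zero] at this
        exact lt_irrefl 0 this
      have hpos : ∃ j ∈ J₀, 0 < lam2 j * ⟪y2 j, wd⟫ := by
        by_contra hno
        push_neg at hno
        exact hterm0 ((Finset.sum_eq_zero_iff_of_nonpos hno).1 hT0 jc0 hjc0J)
      have hneg : ∃ j ∈ J₀, lam2 j * ⟪y2 j, wd⟫ < 0 := by
        by_contra hno
        push_neg at hno
        exact hterm0 ((Finset.sum_eq_zero_iff_of_nonneg hno).1 hT0 jc0 hjc0J)
      obtain ⟨jb, hjbJ, hjb⟩ := hpos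
      obtain ⟨ja, hjaJ, hja⟩ := hneg
      -- unpack jb : positive inner product with wd
      have hjbinner : 0 < ⟪y2 jb, wd⟫ := by
        rcases lt_or_ge 0 ⟪y2 jb, wd⟫ with h | h
        · exact h
        · exfalso
          have := mul_nonpos_of_nonneg_of_nonpos (hlam20 jb) h
          linarith
      have hjblam : lam2 jb ≠ 0 := by
        intro h; rw [h, zero_mul] at hjb; exact lt_irrefl 0 hjb
      have hjbcross : ∃ x, x ∈ interior (X' jb) ∧ ∃ t : ℝ, x = p₀ + t • wd := by
        by_contra h
        have hval : y2 jb = -g := by rw [hy2def]; exact if_neg h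
        rw [hval, inner_neg_left, hgw] at hjbinner
        simp at hjbinner
      have hjainner : ⟪y2 ja, wd⟫ < 0 := by
        rcases lt_or_ge ⟪y2 ja, wd⟫ 0 with h | h
        · exact h
        · exfalso
          have := mul_nonneg (hlam20 ja) h
          linarith
      have hjalam : lam2 ja ≠ 0 := by
        intro h; rw [h, zero_mul] at hja; exact lt_irrefl 0 hja
      have hjacross : ∃ x, x ∈ interior (X' ja) ∧ ∃ t : ℝ, x = p₀ + t • wd := by
        by_contra h
        have hval : y2 ja = -g := by rw [hy2def]; exact if_neg h
        rw [hval, inner_neg_left, hgw] at hjainner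
        simp at hjainner
      have hy2jb : y2 jb = y jb := by rw [hy2def]; exact if_pos hjbcross
      have hy2ja : y2 ja = y ja := by rw [hy2def]; exact if_pos hjacross
      obtain ⟨xb, hxb, tb, htb⟩ := hjbcross
      obtain ⟨xa, hxa, ta, hta⟩ := hjacross
      -- signs of parameters : tb < 0 < ta
      have htb0 : tb < 0 := by
        have h1 := hsign jb hjbJ xb hxb tb htb
        rw [← hy2jb] at h1
        nlinarith
      have hta0 : 0 < ta := by
        have h1 := hsign ja hjaJ xa hxa ta hta
        rw [← hy2ja] at h1
        nlinarith
      -- p₀ is not in U ja nor U jb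
      have hpnotUa : p₀ ∉ U ja :=
        fun h => hkill wd hwd0 hprem2 ja ((hJmem ja).1 hjaJ).1 h ⟨xa, hxa, ta, hta⟩
      have hpnotUb : p₀ ∉ U jb :=
        fun h => hkill wd hwd0 hprem2 jb ((hJmem jb).1 hjbJ).1 h ⟨xb, hxb, tb, htb⟩
      -- ray bounds
      have hrayA : ∀ t : ℝ, p₀ + t • wd ∈ X ja → 0 ≤ t := by
        intro t ht
        have hxaU : p₀ + ta • wd ∈ U ja := by rw [← hta]; exact hVU ja hxa
        exact aux_ray (hUopen ja) (hUcvx ja) hxaU hta0 hpnotUa ((hX ja) ▸ ht)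
      have hrayB : ∀ t : ℝ, p₀ + t • wd ∈ X jb → t ≤ 0 := by
        intro t ht
        have hxbU : p₀ + (-tb) • (-wd) ∈ U jb := by
          rw [show p₀ + (-tb) • (-wd) = p₀ + tb • wd by module, ← htb]
          exact hVU jb hxb
        have h1 : p₀ + (-t) • (-wd) ∈ closure (U jb) := by
          rw [show p₀ + (-t) • (-wd) = p₀ + t • wd by module, ← hX jb]
          exact ht
        have := aux_ray (hUopen jb) (hUcvx jb) hxbU (by linarith) hpnotUb h1
        linarith
      -- phase 2 conclusion
      have hUemp2 : ∀ z : EuclideanSpace ℝ (Fin 2), ¬ (∀ j, lam2 j ≠ 0 → z ∈ U j) :=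
        hUemp lam2 y2 hlam20 hlam2J (fun j hj => (hy2pack j hj).1)
          (fun j hj => (hy2pack j hj).2) ⟨j2, hj2⟩ hlam2sum
      have hint2 : interior (⋂ j ∈ {j | lam2 j ≠ 0}, X j) = ∅ := hIcap lam2 hUemp2
      by_cases hdeg2 : ∀ z ∈ (⋂ j ∈ {j | lam2 j ≠ 0}, X j), z = p₀
      · exact hkill (wl0 - p₀) (sub_ne_zero.2 hwlp)
          (hbuild lam2 hlam2J ⟨j2, hj2⟩ hint2 (wl0 - p₀)
            (fun z hz => ⟨0, by rw [hdeg2 z hz]; simp⟩))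
          l hlc hlU ⟨wl0, hwl, 1, by module⟩
      · push_neg at hdeg2
        obtain ⟨s₂, hs₂Y, hs₂p⟩ := hdeg2
        -- s₂ is not on the line M
        have hs₂M : ¬ ∃ t : ℝ, s₂ = p₀ + t • wd := by
          rintro ⟨t, ht⟩
          have h1 : s₂ ∈ X ja := mem_iInter₂.1 hs₂Y ja hjalam
          have h2 : s₂ ∈ X jb := mem_iInter₂.1 hs₂Y jb hjblam
          rw [ht] at h1 h2
          have h3 := hrayA t h1
          have h4 := hrayB t h2
          have h5 : t = 0 := le_antisymm h4 h3
          apply hs₂p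
          rw [ht, h5]
          simp
        have hY₂conv : Convex ℝ (⋂ j ∈ {j | lam2 j ≠ 0}, X j) :=
          convex_iInter (fun j => convex_iInter (fun _ => hXcvx j))
        have hline2 : ∀ z ∈ (⋂ j ∈ {j | lam2 j ≠ 0}, X j), ∃ t : ℝ, z = p₀ + t • (s₂ - p₀) :=
          aux_thin_line hY₂conv hint2 (hp₀cap lam2 hlam2J) hs₂Y (fun h => hs₂p h.symm)
        have hwd20 : s₂ - p₀ ≠ 0 := sub_ne_zero.2 hs₂p
        have hprem3 := hbuild lam2 hlam2J ⟨j2, hj2⟩ hint2 (s₂ - p₀) hline2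
        have hisline2 : IsLine {x : EuclideanSpace ℝ (Fin 2) | ∃ t : ℝ, x = p₀ + t • (s₂ - p₀)} :=
          ⟨p₀, s₂ - p₀, hwd20, rfl⟩
        obtain ⟨a, b, cc, d, hsub4, hhull4, hseg4, hcross4⟩ :=
          hquad _ hisline2 hprem3 l ⟨p₀, ⟨0, by simp⟩, hlU⟩
        have hM2X : {x : EuclideanSpace ℝ (Fin 2) | ∃ t : ℝ, x = p₀ + t • (s₂ - p₀)} ∩ X l ⊆ X' l := by
          rw [← hseg4]
          exact (hX'cvx l).segment_subset (hsub4 (by simp)) (hsub4 (by simp))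
        obtain ⟨ε, hε, hball⟩ := Metric.isOpen_iff.1 (hUopen l) p₀ hlU
        set δ : ℝ := ε / (2 * (‖s₂ - p₀‖ + 1)) with hδ
        have hδpos : 0 < δ := by positivity
        have hmem : ∀ σsign : ℝ, σsign = 1 ∨ σsign = -1 →
            p₀ + (σsign * δ) • (s₂ - p₀) ∈ X' l := by
          intro σs hσs
          apply hM2X
          constructor
          · exact ⟨σs * δ, rfl⟩
          · apply hXX l
            apply hball
            rw [Metric.mem_ball, dist_eq_norm, add_sub_cancel_left, norm_smul,
              Real.norm_eq_abs]
            have habs : |σs * δ| = δ := by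
              rcases hσs with h | h <;> rw [h] <;> simp [abs_of_pos hδpos]
            rw [habs, hδ]
            rw [div_mul_eq_mul_div, div_lt_iff₀ (by positivity)]
            nlinarith [norm_nonneg (s₂ - p₀)]
        have hplus := hX'lbound _ (hmem 1 (Or.inl rfl))
        have hminus := hX'lbound _ (hmem (-1) (Or.inr rfl))
        rw [inner_add_right, real_inner_smul_right] at hplus hminus
        have hzero : ⟪g, s₂ - p₀⟫ = 0 := by nlinarith
        obtain ⟨t, ht⟩ := hgdec _ hzero
        apply hs₂M
        exact ⟨t, by rw [← ht]; abel⟩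
  · -- easy direction : code U ⊆ code U'
    rintro c ⟨z, rfl⟩
    obtain ⟨t₁, t₂, t₃, pw, hhull, hpint, hpat, hvert⟩ := htriangle _ ⟨z, rfl⟩
    refine ⟨pw, ?_⟩
    ext i
    simp only [pattern, mem_setOf_eq]
    constructor
    · intro hi
      have h1 : pw ∈ U i := by
        have h2 : interior (X' i) ⊆ U i := by
          have h3 : interior (X i) = U i := by
            rw [hX i]; exact aux_interior_closure (hUopen i) (hUcvx i)
          rw [← h3]; exact interior_mono (hX'sub i)
        exact h2 hi
      have h4 : i ∈ pattern U pw := h1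
      rwa [hpat] at h4
    · intro hi
      have h1 : convexHull ℝ {t₁, t₂, t₃} ⊆ X' i :=
        convexHull_min (hvert i hi) (hX'cvx i)
      exact interior_mono h1 hpint
end
end
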